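/- arXiv:2601.21859 — 6 statements merged into one kernel-verified Lean document; each statement's English description precedes it below -/
import Mathlib

section
/- For every channel w and every strictly positive pmf q₁ on ℛ̂, strictly positive conditional pmfs q₂(·|r̂,x) on 𝒵 and strictly positive conditional pmfs q₃(·|z) on ℛ̂, one has f(w; q₁; q₂; q₃) ≥ g(w). -/
open Real Finset

noncomputable section

variable {𝒵 𝒳 ℛ ℛh : Type} [Fintype 𝒵] [Fintype 𝒳] [Fintype ℛ] [Fintype ℛh]

/-- Marginal `p(z,x)` of the fixed joint pmf `p(z,x,r)`. -/
def pZX (p : 𝒵 → 𝒳 → ℛ → ℝ) (z : 𝒵) (x : 𝒳) : ℝ := ∑ r, p z x r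

/-- Marginal `p(x)`. -/
def pX (p : 𝒵 → 𝒳 → ℛ → ℝ) (x : 𝒳) : ℝ := ∑ z, ∑ r, p z x r

/-- Marginal `p(z)`. -/
def pZ (p : 𝒵 → 𝒳 → ℛ → ℝ) (z : 𝒵) : ℝ := ∑ x, ∑ r, p z x r

/-- `p` is a probability mass function on `𝒵 × 𝒳 × ℛ`. -/
def IsPMF (p : 𝒵 → 𝒳 → ℛ → ℝ) : Prop :=
  (∀ z x r, 0 ≤ p z x r) ∧ ∑ z, ∑ x, ∑ r, p z x r = 1

/-- A channel `w(r̂|z,x)`: entries in `[0,1]` summing to `1` over `r̂` for each `(z,x)`. -/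
def IsChannel (w : ℛh → 𝒵 → 𝒳 → ℝ) : Prop :=
  (∀ rh z x, 0 ≤ w rh z x ∧ w rh z x ≤ 1) ∧ (∀ z x, ∑ rh, w rh z x = 1)

/-- Induced joint pmf `q(r̂,z,x) = w(r̂|z,x) p(z,x)`. -/
def qJ (p : 𝒵 → 𝒳 → ℛ → ℝ) (w : ℛh → 𝒵 → 𝒳 → ℝ) (rh : ℛh) (z : 𝒵) (x : 𝒳) : ℝ :=
  w rh z x * pZX p z x

/-- Induced marginal `q(r̂,x)`. -/
def qRhX (p : 𝒵 → 𝒳 → ℛ → ℝ) (w : ℛh → 𝒵 → 𝒳 → ℝ) (rh : ℛh) (x : 𝒳) : ℝ :=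
  ∑ z, qJ p w rh z x

/-- Induced marginal `q(r̂)`. -/
def qRh (p : 𝒵 → 𝒳 → ℛ → ℝ) (w : ℛh → 𝒵 → 𝒳 → ℝ) (rh : ℛh) : ℝ :=
  ∑ z, ∑ x, qJ p w rh z x

/-- Induced marginal `q(r̂,z)`. -/
def qRhZ (p : 𝒵 → 𝒳 → ℛ → ℝ) (w : ℛh → 𝒵 → 𝒳 → ℝ) (rh : ℛh) (z : 𝒵) : ℝ :=
  ∑ x, qJ p w rh z x

/-- Induced marginal `q(z)`. -/
def qZ (p : 𝒵 → 𝒳 → ℛ → ℝ) (w : ℛh → 𝒵 → 𝒳 → ℝ) (z : 𝒵) : ℝ :=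
  ∑ rh, ∑ x, qJ p w rh z x

/-- Expected distortion `E_q[d(R̂,R)]` under `q(r̂,z,x,r) = w(r̂|z,x) p(z,x,r)`. -/
def expDist (p : 𝒵 → 𝒳 → ℛ → ℝ) (w : ℛh → 𝒵 → 𝒳 → ℝ) (d : ℛh → ℛ → ℝ) : ℝ :=
  ∑ rh, ∑ z, ∑ x, ∑ r, w rh z x * p z x r * d rh r

/-- Mutual information `I(R̂;X)` of the induced joint pmf (base-2 logs, `0·log₂0 = 0`). -/
def IRhX (p : 𝒵 → 𝒳 → ℛ → ℝ) (w : ℛh → 𝒵 → 𝒳 → ℝ) : ℝ :=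
  ∑ rh, ∑ x, qRhX p w rh x * logb 2 (qRhX p w rh x / (qRh p w rh * pX p x))

/-- Mutual information `I(R̂,Z;X)` of the induced joint pmf. -/
def IRhZX (p : 𝒵 → 𝒳 → ℛ → ℝ) (w : ℛh → 𝒵 → 𝒳 → ℝ) : ℝ :=
  ∑ rh, ∑ z, ∑ x, qJ p w rh z x * logb 2 (qJ p w rh z x / (qRhZ p w rh z * pX p x))

/-- Mutual information `I(Z;X)` of the fixed pmf `p`. -/
def IZX (p : 𝒵 → 𝒳 → ℛ → ℝ) : ℝ :=
  ∑ z, ∑ x, pZX p z x * logb 2 (pZX p z x / (pZ p z * pX p x))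

/-- Entropy `H(Z)` of the fixed pmf `p`. -/
def HZ (p : 𝒵 → 𝒳 → ℛ → ℝ) : ℝ := -∑ z, pZ p z * logb 2 (pZ p z)

/-- The objective `g(w) = E_q[d] + μ₁ (I(R̂;X) − ε) + μ₂ (I(R̂,Z;X) − δ)`. -/
def gObj (p : 𝒵 → 𝒳 → ℛ → ℝ) (d : ℛh → ℛ → ℝ) (μ₁ μ₂ ε δ : ℝ)
    (w : ℛh → 𝒵 → 𝒳 → ℝ) : ℝ :=
  expDist p w d + μ₁ * (IRhX p w - ε) + μ₂ * (IRhZX p w - δ)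

/-- The constant `θ = (μ₁+μ₂) I(Z;X) − μ₁ H(Z) − μ₁ ε − μ₂ δ`, computed from `p` alone. -/
def θconst (p : 𝒵 → 𝒳 → ℛ → ℝ) (μ₁ μ₂ ε δ : ℝ) : ℝ :=
  (μ₁ + μ₂) * IZX p - μ₁ * HZ p - μ₁ * ε - μ₂ * δ

/-- The surrogate objective
`f(w; q₁; q₂; q₃) = ∑_{(r̂,z,x): p(z,x)>0} p(z,x) w(r̂|z,x) [∑_r p(r|z,x) d(r̂,r)
  + (μ₁+μ₂) log₂ w(r̂|z,x) − μ₁ log₂ q₁(r̂) − μ₁ log₂ q₂(z|r̂,x) − μ₂ log₂ q₃(r̂|z)] + θ`. -/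
def fObj (p : 𝒵 → 𝒳 → ℛ → ℝ) (d : ℛh → ℛ → ℝ) (μ₁ μ₂ ε δ : ℝ)
    (w : ℛh → 𝒵 → 𝒳 → ℝ) (q₁ : ℛh → ℝ) (q₂ : 𝒵 → ℛh → 𝒳 → ℝ) (q₃ : ℛh → 𝒵 → ℝ) : ℝ :=
  (∑ rh, ∑ z, ∑ x,
      if 0 < pZX p z x then
        pZX p z x * w rh z x *
          ((∑ r, (p z x r / pZX p z x) * d rh r)
            + (μ₁ + μ₂) * logb 2 (w rh z x)
            - μ₁ * logb 2 (q₁ rh) - μ₁ * logb 2 (q₂ z rh x) - μ₂ * logb 2 (q₃ rh z))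
      else 0)
    + θconst p μ₁ μ₂ ε δ

/-- `q₁` is a strictly positive pmf on `ℛ̂`. -/
def PosPMF1 (q₁ : ℛh → ℝ) : Prop := (∀ rh, 0 < q₁ rh) ∧ ∑ rh, q₁ rh = 1

/-- `q₂(·|r̂,x)` is, for each `(r̂,x)`, a strictly positive pmf on `𝒵`. -/
def PosPMF2 (q₂ : 𝒵 → ℛh → 𝒳 → ℝ) : Prop :=
  (∀ z rh x, 0 < q₂ z rh x) ∧ ∀ rh x, ∑ z, q₂ z rh x = 1

/-- `q₃(·|z)` is, for each `z`, a strictly positive pmf on `ℛ̂`. -/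
def PosPMF3 (q₃ : ℛh → 𝒵 → ℝ) : Prop :=
  (∀ rh z, 0 < q₃ rh z) ∧ ∀ z, ∑ rh, q₃ rh z = 1


lemma gibbs_aux {ι : Type} [Fintype ι] (a b : ι → ℝ)
    (ha : ∀ i, 0 ≤ a i) (hb : ∀ i, 0 ≤ b i)
    (hab : ∀ i, b i = 0 → a i = 0)
    (hsum : ∑ i, b i ≤ ∑ i, a i) :
    0 ≤ ∑ i, a i * Real.logb 2 (a i / b i) := by
  have hlog2 : (0:ℝ) < Real.log 2 := Real.log_pos one_lt_two
  have key : ∀ i, a i * Real.logb 2 (b i / a i) ≤ (b i - a i) / Real.log 2 := by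
    intro i
    rcases eq_or_lt_of_le (ha i) with h0 | h0
    · rw [← h0]
      simp only [zero_mul, sub_zero]
      exact div_nonneg (hb i) hlog2.le
    · have hbne : b i ≠ 0 := fun h => absurd (hab i h) (ne_of_gt h0)
      have hbpos : 0 < b i := lt_of_le_of_ne (hb i) (Ne.symm hbne)
      have h1 : Real.log (b i / a i) ≤ b i / a i - 1 :=
        Real.log_le_sub_one_of_pos (div_pos hbpos h0)
      have h2 : a i * Real.log (b i / a i) ≤ b i - a i := by
        have h3 := mul_le_mul_of_nonneg_left h1 (le_of_lt h0)
        calc a i * Real.log (b i / a i) ≤ a i * (b i / a i - 1) := h3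
          _ = b i - a i := by field_simp
      rw [Real.logb, ← mul_div_assoc]
      gcongr
  have hsum2 : ∑ i, a i * Real.logb 2 (b i / a i) ≤ 0 := by
    calc ∑ i, a i * Real.logb 2 (b i / a i) ≤ ∑ i, (b i - a i) / Real.log 2 :=
          Finset.sum_le_sum fun i _ => key i
      _ = (∑ i, b i - ∑ i, a i) / Real.log 2 := by
          rw [← Finset.sum_div, Finset.sum_sub_distrib]
      _ ≤ 0 := div_nonpos_of_nonpos_of_nonneg (sub_nonpos.mpr hsum) hlog2.le
  have flip : ∀ i, a i * Real.logb 2 (a i / b i) = -(a i * Real.logb 2 (b i / a i)) := by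
    intro i
    rw [show a i / b i = (b i / a i)⁻¹ from (inv_div (b i) (a i)).symm, Real.logb_inv]
    ring
  calc (0:ℝ) ≤ -(∑ i, a i * Real.logb 2 (b i / a i)) := neg_nonneg.mpr hsum2
    _ = ∑ i, -(a i * Real.logb 2 (b i / a i)) := by rw [Finset.sum_neg_distrib]
    _ = ∑ i, a i * Real.logb 2 (a i / b i) := Finset.sum_congr rfl fun i _ => (flip i).symm


/-- For every channel `w` and every strictly positive pmf `q₁` on `ℛ̂`,
strictly positive conditional pmfs `q₂(·|r̂,x)` on `𝒵` and `q₃(·|z)` on `ℛ̂`, one has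
`f(w; q₁; q₂; q₃) ≥ g(w)`. -/
theorem statement2
    (p : 𝒵 → 𝒳 → ℛ → ℝ) (hp : IsPMF p)
    (d : ℛh → ℛ → ℝ) (hd : ∀ rh r, 0 ≤ d rh r)
    (μ₁ μ₂ : ℝ) (hμ₁ : 0 ≤ μ₁) (hμ₂ : 0 ≤ μ₂) (ε δ : ℝ)
    (w : ℛh → 𝒵 → 𝒳 → ℝ) (hw : IsChannel w)
    (q₁ : ℛh → ℝ) (hq₁ : PosPMF1 q₁)
    (q₂ : 𝒵 → ℛh → 𝒳 → ℝ) (hq₂ : PosPMF2 q₂)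
    (q₃ : ℛh → 𝒵 → ℝ) (hq₃ : PosPMF3 q₃) :
    fObj p d μ₁ μ₂ ε δ w q₁ q₂ q₃ ≥ gObj p d μ₁ μ₂ ε δ w := by
  obtain ⟨hpnn, hpsum⟩ := hp
  obtain ⟨hwb, hwsum⟩ := hw
  obtain ⟨hq1pos, hq1sum⟩ := hq₁
  obtain ⟨hq2pos, hq2sum⟩ := hq₂
  obtain ⟨hq3pos, hq3sum⟩ := hq₃
  have pZXnn : ∀ z x, 0 ≤ pZX p z x := fun z x => Finset.sum_nonneg fun r _ => hpnn z x r
  have qJnn : ∀ rh z x, 0 ≤ qJ p w rh z x := fun rh z x =>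
    mul_nonneg (hwb rh z x).1 (pZXnn z x)
  have pZnn : ∀ z, 0 ≤ pZ p z := fun z =>
    Finset.sum_nonneg fun x _ => Finset.sum_nonneg fun r _ => hpnn z x r
  have qRhXnn : ∀ rh x, 0 ≤ qRhX p w rh x := fun rh x =>
    Finset.sum_nonneg fun z _ => qJnn rh z x
  have qRhZnn : ∀ rh z, 0 ≤ qRhZ p w rh z := fun rh z =>
    Finset.sum_nonneg fun x _ => qJnn rh z x
  have hpXeq : ∀ x, pX p x = ∑ z, pZX p z x := fun _ => rfl
  have hpZeq : ∀ z, pZ p z = ∑ x, pZX p z x := fun _ => rfl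
  have hqRhXeq : ∀ rh x, qRhX p w rh x = ∑ z, qJ p w rh z x := fun _ _ => rfl
  have hqRhZeq : ∀ rh z, qRhZ p w rh z = ∑ x, qJ p w rh z x := fun _ _ => rfl
  have hqRheq : ∀ rh, qRh p w rh = ∑ z, ∑ x, qJ p w rh z x := fun _ => rfl
  have mZX : ∀ z x, ∑ rh, qJ p w rh z x = pZX p z x := by
    intro z x
    unfold qJ
    rw [← Finset.sum_mul, hwsum z x, one_mul]
  have hQZ : ∀ z, ∑ rh, ∑ x, qJ p w rh z x = pZ p z := by
    intro z
    rw [Finset.sum_comm]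
    calc ∑ x, ∑ rh, qJ p w rh z x = ∑ x, pZX p z x :=
          Finset.sum_congr rfl fun x _ => mZX z x
      _ = pZ p z := rfl
  have hp0 : ∀ z x, pZX p z x = 0 → ∀ r, p z x r = 0 := by
    intro z x h r
    exact (Finset.sum_eq_zero_iff_of_nonneg (fun r _ => hpnn z x r)).mp h r (Finset.mem_univ r)
  have hpZ0 : ∀ z, pZ p z = 0 → ∀ x, pZX p z x = 0 := by
    intro z h x
    have h' : ∑ x, pZX p z x = 0 := by rw [← hpZeq z]; exact h
    exact (Finset.sum_eq_zero_iff_of_nonneg (fun x _ => pZXnn z x)).mp h' x (Finset.mem_univ x)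
  have hqtot : ∑ rh, qRh p w rh = 1 := by
    calc ∑ rh, qRh p w rh = ∑ rh, ∑ z, ∑ x, qJ p w rh z x := rfl
      _ = ∑ z, ∑ rh, ∑ x, qJ p w rh z x := Finset.sum_comm
      _ = ∑ z, ∑ x, ∑ rh, qJ p w rh z x :=
          Finset.sum_congr rfl fun z _ => Finset.sum_comm
      _ = ∑ z, ∑ x, pZX p z x :=
          Finset.sum_congr rfl fun z _ => Finset.sum_congr rfl fun x _ => mZX z x
      _ = 1 := hpsum
  have hf : fObj p d μ₁ μ₂ ε δ w q₁ q₂ q₃ =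
      expDist p w d +
        (∑ rh, ∑ z, ∑ x, qJ p w rh z x *
          ((μ₁ + μ₂) * logb 2 (w rh z x) - μ₁ * logb 2 (q₁ rh)
            - μ₁ * logb 2 (q₂ z rh x) - μ₂ * logb 2 (q₃ rh z)))
        + θconst p μ₁ μ₂ ε δ := by
    unfold fObj expDist
    congr 1
    rw [← Finset.sum_add_distrib]
    refine Finset.sum_congr rfl fun rh _ => ?_
    rw [← Finset.sum_add_distrib]
    refine Finset.sum_congr rfl fun z _ => ?_
    rw [← Finset.sum_add_distrib]
    refine Finset.sum_congr rfl fun x _ => ?_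
    by_cases hpos : 0 < pZX p z x
    · rw [if_pos hpos]
      have hne : pZX p z x ≠ 0 := ne_of_gt hpos
      have h1 : pZX p z x * w rh z x * (∑ r, p z x r / pZX p z x * d rh r)
          = ∑ r, w rh z x * p z x r * d rh r := by
        rw [Finset.mul_sum]
        refine Finset.sum_congr rfl fun r _ => ?_
        field_simp
      rw [show qJ p w rh z x = w rh z x * pZX p z x from rfl, ← h1]
      ring
    · rw [if_neg hpos]
      have h0 : pZX p z x = 0 := le_antisymm (not_lt.mp hpos) (pZXnn z x)
      have hq0 : qJ p w rh z x = 0 := by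
        rw [show qJ p w rh z x = w rh z x * pZX p z x from rfl, h0, mul_zero]
      simp [hp0 z x h0, hq0]
  have ptid : ∀ rh z x,
      qJ p w rh z x * ((μ₁ + μ₂) * logb 2 (w rh z x) - μ₁ * logb 2 (q₁ rh)
          - μ₁ * logb 2 (q₂ z rh x) - μ₂ * logb 2 (q₃ rh z)) =
        μ₁ * (qJ p w rh z x * logb 2 (qRh p w rh / q₁ rh))
      + μ₁ * (qJ p w rh z x * logb 2 (qJ p w rh z x / (qRhX p w rh x * q₂ z rh x)))
      + μ₂ * (qJ p w rh z x * logb 2 (qRhZ p w rh z / (pZ p z * q₃ rh z)))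
      - (μ₁ + μ₂) * (qJ p w rh z x * logb 2 (pZX p z x / (pZ p z * pX p x)))
      - μ₁ * (qJ p w rh z x * logb 2 (pZ p z))
      + μ₁ * (qJ p w rh z x * logb 2 (qRhX p w rh x / (qRh p w rh * pX p x)))
      + μ₂ * (qJ p w rh z x * logb 2 (qJ p w rh z x / (qRhZ p w rh z * pX p x))) := by
    intro rh z x
    by_cases hq : qJ p w rh z x = 0
    · rw [hq]; ring
    · have hmul : w rh z x * pZX p z x ≠ 0 := hq
      obtain ⟨hwne, hpZXne⟩ := mul_ne_zero_iff.mp hmul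
      have hqjpos : 0 < qJ p w rh z x := lt_of_le_of_ne (qJnn rh z x) (Ne.symm hq)
      have hpZXpos : 0 < pZX p z x := lt_of_le_of_ne (pZXnn z x) (Ne.symm hpZXne)
      have hpXpos : 0 < pX p x := by
        rw [hpXeq x]
        exact lt_of_lt_of_le hpZXpos
          (Finset.single_le_sum (f := fun i => pZX p i x)
            (fun i _ => pZXnn i x) (Finset.mem_univ z))
      have hpZpos : 0 < pZ p z := by
        rw [hpZeq z]
        exact lt_of_lt_of_le hpZXpos
          (Finset.single_le_sum (f := fun i => pZX p z i)
            (fun i _ => pZXnn z i) (Finset.mem_univ x))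
      have hqRhZpos : 0 < qRhZ p w rh z := by
        rw [hqRhZeq rh z]
        exact lt_of_lt_of_le hqjpos
          (Finset.single_le_sum (f := fun i => qJ p w rh z i)
            (fun i _ => qJnn rh z i) (Finset.mem_univ x))
      have hqRhXpos : 0 < qRhX p w rh x := by
        rw [hqRhXeq rh x]
        exact lt_of_lt_of_le hqjpos
          (Finset.single_le_sum (f := fun i => qJ p w rh i x)
            (fun i _ => qJnn rh i x) (Finset.mem_univ z))
      have hqRhpos : 0 < qRh p w rh := by
        rw [hqRheq rh]
        have h1 : qJ p w rh z x ≤ ∑ x', qJ p w rh z x' :=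
          Finset.single_le_sum (f := fun i => qJ p w rh z i)
            (fun i _ => qJnn rh z i) (Finset.mem_univ x)
        have h2 : (∑ x', qJ p w rh z x') ≤ ∑ z', ∑ x', qJ p w rh z' x' :=
          Finset.single_le_sum (f := fun i => ∑ x', qJ p w rh i x')
            (fun i _ => Finset.sum_nonneg fun j _ => qJnn rh i j) (Finset.mem_univ z)
        exact lt_of_lt_of_le hqjpos (h1.trans h2)
      have hlogqJ : logb 2 (qJ p w rh z x) = logb 2 (w rh z x) + logb 2 (pZX p z x) :=
        Real.logb_mul hwne hpZXne
      rw [Real.logb_div hqRhpos.ne' (hq1pos rh).ne',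
          Real.logb_div hq (mul_ne_zero hqRhXpos.ne' (hq2pos z rh x).ne'),
          Real.logb_mul hqRhXpos.ne' (hq2pos z rh x).ne',
          Real.logb_div hqRhZpos.ne' (mul_ne_zero hpZpos.ne' (hq3pos rh z).ne'),
          Real.logb_mul hpZpos.ne' (hq3pos rh z).ne',
          Real.logb_div hpZXpos.ne' (mul_ne_zero hpZpos.ne' hpXpos.ne'),
          Real.logb_mul hpZpos.ne' hpXpos.ne',
          Real.logb_div hqRhXpos.ne' (mul_ne_zero hqRhpos.ne' hpXpos.ne'),
          Real.logb_mul hqRhpos.ne' hpXpos.ne',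
          Real.logb_div hq (mul_ne_zero hqRhZpos.ne' hpXpos.ne'),
          Real.logb_mul hqRhZpos.ne' hpXpos.ne',
          hlogqJ]
      ring
  have hS : (∑ rh, ∑ z, ∑ x, qJ p w rh z x *
        ((μ₁ + μ₂) * logb 2 (w rh z x) - μ₁ * logb 2 (q₁ rh)
          - μ₁ * logb 2 (q₂ z rh x) - μ₂ * logb 2 (q₃ rh z))) =
      μ₁ * (∑ rh, ∑ z, ∑ x, qJ p w rh z x * logb 2 (qRh p w rh / q₁ rh))
      + μ₁ * (∑ rh, ∑ z, ∑ x, qJ p w rh z x *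
          logb 2 (qJ p w rh z x / (qRhX p w rh x * q₂ z rh x)))
      + μ₂ * (∑ rh, ∑ z, ∑ x, qJ p w rh z x *
          logb 2 (qRhZ p w rh z / (pZ p z * q₃ rh z)))
      - (μ₁ + μ₂) * (∑ rh, ∑ z, ∑ x, qJ p w rh z x *
          logb 2 (pZX p z x / (pZ p z * pX p x)))
      - μ₁ * (∑ rh, ∑ z, ∑ x, qJ p w rh z x * logb 2 (pZ p z))
      + μ₁ * (∑ rh, ∑ z, ∑ x, qJ p w rh z x *
          logb 2 (qRhX p w rh x / (qRh p w rh * pX p x)))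
      + μ₂ * (∑ rh, ∑ z, ∑ x, qJ p w rh z x *
          logb 2 (qJ p w rh z x / (qRhZ p w rh z * pX p x))) := by
    refine Eq.trans (Finset.sum_congr rfl fun rh _ => Finset.sum_congr rfl fun z _ =>
      Finset.sum_congr rfl fun x _ => ptid rh z x) ?_
    simp only [Finset.sum_add_distrib, Finset.sum_sub_distrib, ← Finset.mul_sum]
  have e1 : (∑ rh, ∑ z, ∑ x, qJ p w rh z x * logb 2 (pZX p z x / (pZ p z * pX p x)))
      = IZX p := by
    unfold IZX
    rw [Finset.sum_comm]
    refine Finset.sum_congr rfl fun z _ => ?_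
    rw [Finset.sum_comm]
    refine Finset.sum_congr rfl fun x _ => ?_
    rw [← Finset.sum_mul, mZX z x]
  have e2 : (∑ rh, ∑ z, ∑ x, qJ p w rh z x * logb 2 (pZ p z))
      = ∑ z, pZ p z * logb 2 (pZ p z) := by
    rw [Finset.sum_comm]
    refine Finset.sum_congr rfl fun z _ => ?_
    simp only [← Finset.sum_mul]
    rw [hQZ z]
  have e3 : (∑ rh, ∑ z, ∑ x, qJ p w rh z x *
      logb 2 (qRhX p w rh x / (qRh p w rh * pX p x))) = IRhX p w := by
    unfold IRhX
    refine Finset.sum_congr rfl fun rh _ => ?_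
    rw [Finset.sum_comm]
    refine Finset.sum_congr rfl fun x _ => ?_
    rw [← Finset.sum_mul]
    rfl
  have e4 : (∑ rh, ∑ z, ∑ x, qJ p w rh z x *
      logb 2 (qRhZ p w rh z / (pZ p z * q₃ rh z))) =
      ∑ z, ∑ rh, qRhZ p w rh z * logb 2 (qRhZ p w rh z / (pZ p z * q₃ rh z)) := by
    rw [Finset.sum_comm]
    refine Finset.sum_congr rfl fun z _ => Finset.sum_congr rfl fun rh _ => ?_
    rw [← Finset.sum_mul]
    rfl
  have e5 : (∑ rh, ∑ z, ∑ x, qJ p w rh z x * logb 2 (qRh p w rh / q₁ rh)) =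
      ∑ rh, qRh p w rh * logb 2 (qRh p w rh / q₁ rh) := by
    refine Finset.sum_congr rfl fun rh _ => ?_
    simp only [← Finset.sum_mul]
    rfl
  have e6 : (∑ rh, ∑ z, ∑ x, qJ p w rh z x *
      logb 2 (qJ p w rh z x / (qRhX p w rh x * q₂ z rh x))) =
      ∑ rh, ∑ x, ∑ z, qJ p w rh z x *
        logb 2 (qJ p w rh z x / (qRhX p w rh x * q₂ z rh x)) :=
    Finset.sum_congr rfl fun rh _ => Finset.sum_comm
  have e7 : (∑ rh, ∑ z, ∑ x, qJ p w rh z x *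
      logb 2 (qJ p w rh z x / (qRhZ p w rh z * pX p x))) = IRhZX p w := rfl
  have key : fObj p d μ₁ μ₂ ε δ w q₁ q₂ q₃ =
      gObj p d μ₁ μ₂ ε δ w
      + (μ₁ * (∑ rh, qRh p w rh * logb 2 (qRh p w rh / q₁ rh))
        + μ₁ * (∑ rh, ∑ x, ∑ z, qJ p w rh z x *
            logb 2 (qJ p w rh z x / (qRhX p w rh x * q₂ z rh x)))
        + μ₂ * (∑ z, ∑ rh, qRhZ p w rh z *
            logb 2 (qRhZ p w rh z / (pZ p z * q₃ rh z)))) := by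
    rw [hf, hS, e1, e2, e3, e4, e5, e6, e7]
    unfold gObj θconst HZ
    ring
  have hA1 : 0 ≤ ∑ rh, qRh p w rh * logb 2 (qRh p w rh / q₁ rh) := by
    refine gibbs_aux _ _
      (fun rh => Finset.sum_nonneg fun z _ => Finset.sum_nonneg fun x _ => qJnn rh z x)
      (fun rh => (hq1pos rh).le)
      (fun rh h => absurd h (hq1pos rh).ne') ?_
    exact le_of_eq (hq1sum.trans hqtot.symm)
  have hA2 : 0 ≤ ∑ rh, ∑ x, ∑ z, qJ p w rh z x *
      logb 2 (qJ p w rh z x / (qRhX p w rh x * q₂ z rh x)) := by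
    refine Finset.sum_nonneg fun rh _ => Finset.sum_nonneg fun x _ => ?_
    refine gibbs_aux (fun z => qJ p w rh z x) (fun z => qRhX p w rh x * q₂ z rh x)
      (fun z => qJnn rh z x)
      (fun z => mul_nonneg (qRhXnn rh x) (hq2pos z rh x).le) ?_ ?_
    · intro z h
      have hx : qRhX p w rh x = 0 := by
        rcases mul_eq_zero.mp h with h' | h'
        · exact h'
        · exact absurd h' (hq2pos z rh x).ne'
      have hle : qJ p w rh z x ≤ qRhX p w rh x := by
        rw [hqRhXeq rh x]
        exact Finset.single_le_sum (f := fun i => qJ p w rh i x)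
          (fun i _ => qJnn rh i x) (Finset.mem_univ z)
      exact le_antisymm (hx ▸ hle) (qJnn rh z x)
    · rw [← Finset.mul_sum, hq2sum rh x, mul_one]
      exact le_of_eq (hqRhXeq rh x)
  have hB : 0 ≤ ∑ z, ∑ rh, qRhZ p w rh z *
      logb 2 (qRhZ p w rh z / (pZ p z * q₃ rh z)) := by
    refine Finset.sum_nonneg fun z _ => ?_
    refine gibbs_aux (fun rh => qRhZ p w rh z) (fun rh => pZ p z * q₃ rh z)
      (fun rh => qRhZnn rh z)
      (fun rh => mul_nonneg (pZnn z) (hq3pos rh z).le) ?_ ?_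
    · intro rh h
      have hz : pZ p z = 0 := by
        rcases mul_eq_zero.mp h with h' | h'
        · exact h'
        · exact absurd h' (hq3pos rh z).ne'
      show qRhZ p w rh z = 0
      rw [hqRhZeq rh z]
      refine Finset.sum_eq_zero fun x _ => ?_
      rw [show qJ p w rh z x = w rh z x * pZX p z x from rfl, hpZ0 z hz x, mul_zero]
    · rw [← Finset.mul_sum, hq3sum z, mul_one]
      exact le_of_eq (hQZ z).symm
  have h1 := mul_nonneg hμ₁ hA1
  have h2 := mul_nonneg hμ₁ hA2
  have h3 := mul_nonneg hμ₂ hB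
  rw [ge_iff_le, key]
  linarith


end
end

section
/- The infimum of g(w) over all channels w equals the infimum of f(w; q₁; q₂; q₃) over all channels w, all strictly positive pmfs q₁ on ℛ̂, all strictly positive conditional pmfs q₂(·|r̂,x) on 𝒵, and all strictly positive conditional pmfs q₃(·|z) on ℛ̂. -/
open Real Finset

noncomputable section

variable {𝒵 𝒳 ℛ ℛh : Type} [Fintype 𝒵] [Fintype 𝒳] [Fintype ℛ] [Fintype ℛh]

lemma log_le_aux {a b : ℝ} (ha : 0 ≤ a) (hb : 0 < b) :
    a * Real.log b - a * Real.log a ≤ b - a := by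
  rcases eq_or_lt_of_le ha with h | h
  · simp only [← h, zero_mul, sub_zero, sub_self]; linarith
  · have h1 := Real.log_le_sub_one_of_pos (show 0 < b / a by positivity)
    have h2 : Real.log (b / a) = Real.log b - Real.log a :=
      Real.log_div (ne_of_gt hb) (ne_of_gt h)
    have h3 : a * Real.log (b / a) ≤ a * (b / a - 1) := by
      exact mul_le_mul_of_nonneg_left h1 ha
    have h4 : a * (b / a - 1) = b - a := by field_simp
    rw [h2] at h3
    nlinarith

lemma klb {ι : Type} [Fintype ι] (a b : ι → ℝ) (ha : ∀ i, 0 ≤ a i) (hb : ∀ i, 0 < b i)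
    (hab : ∑ i, b i ≤ ∑ i, a i) :
    ∑ i, a i * Real.logb 2 (b i) ≤ ∑ i, a i * Real.logb 2 (a i) := by
  have h2 : (0:ℝ) < Real.log 2 := Real.log_pos one_lt_two
  have key : ∑ i, a i * Real.log (b i) ≤ ∑ i, a i * Real.log (a i) := by
    have h := Finset.sum_le_sum (fun i (_ : i ∈ Finset.univ) => log_le_aux (ha i) (hb i))
    rw [Finset.sum_sub_distrib, Finset.sum_sub_distrib] at h
    linarith
  have e1 : ∀ f : ι → ℝ, ∑ i, a i * Real.logb 2 (f i)
      = (∑ i, a i * Real.log (f i)) / Real.log 2 := by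
    intro f
    rw [Finset.sum_div]
    exact Finset.sum_congr rfl fun i _ => by rw [Real.logb]; ring
  rw [e1 b, e1 a]
  exact div_le_div_of_nonneg_right key (le_of_lt h2)

lemma klb_cond {ι : Type} [Fintype ι] (a b : ι → ℝ) (ha : ∀ i, 0 ≤ a i) (hb : ∀ i, 0 < b i)
    (hb1 : ∑ i, b i = 1) :
    ∑ i, a i * Real.logb 2 (b i) ≤ ∑ i, a i * Real.logb 2 (a i / ∑ j, a j) := by
  rcases eq_or_lt_of_le (Finset.sum_nonneg fun i _ => ha i) with h0 | h0
  · have hz : ∀ i, a i = 0 := fun i =>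
      (Finset.sum_eq_zero_iff_of_nonneg (fun i _ => ha i)).mp h0.symm i (Finset.mem_univ i)
    simp [hz]
  · set T := ∑ j, a j with hT
    have hkl := klb a (fun i => T * b i) ha (fun i => mul_pos h0 (hb i))
      (by rw [← Finset.mul_sum, hb1, mul_one])
    have e1 : ∑ i, a i * Real.logb 2 (T * b i)
        = T * Real.logb 2 T + ∑ i, a i * Real.logb 2 (b i) := by
      have hc : ∀ i ∈ Finset.univ, a i * Real.logb 2 (T * b i)
          = a i * Real.logb 2 T + a i * Real.logb 2 (b i) := fun i _ => by
        rw [Real.logb_mul (ne_of_gt h0) (ne_of_gt (hb i))]; ring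
      rw [Finset.sum_congr rfl hc, Finset.sum_add_distrib, ← Finset.sum_mul, ← hT]
    have e2 : ∑ i, a i * Real.logb 2 (a i / T)
        = ∑ i, a i * Real.logb 2 (a i) - T * Real.logb 2 T := by
      have hc : ∀ i ∈ Finset.univ, a i * Real.logb 2 (a i / T)
          = a i * Real.logb 2 (a i) - a i * Real.logb 2 T := by
        intro i _
        rcases eq_or_lt_of_le (ha i) with h | h
        · simp [← h]
        · rw [Real.logb_div (ne_of_gt h) (ne_of_gt h0)]; ring
      rw [Finset.sum_congr rfl hc, Finset.sum_sub_distrib, ← Finset.sum_mul, ← hT]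
    rw [e1] at hkl
    rw [e2]
    linarith

lemma inf_glue (S T : Set ℝ) (h1 : ∀ y ∈ T, ∃ y' ∈ S, y' ≤ y)
    (h2 : ∀ y ∈ S, ∀ η : ℝ, 0 < η → ∃ y'' ∈ T, y'' ≤ y + η) : sInf S = sInf T := by
  rcases Set.eq_empty_or_nonempty S with hS | hS
  · have hT : T = ∅ := by
      rw [Set.eq_empty_iff_forall_notMem]
      intro y hy
      obtain ⟨y', hy', _⟩ := h1 y hy
      rw [hS] at hy'; exact hy'
    rw [hS, hT]
  · obtain ⟨y₀, hy₀⟩ := hS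
    obtain ⟨y₁, hy₁, _⟩ := h2 y₀ hy₀ 1 one_pos
    have hT : T.Nonempty := ⟨y₁, hy₁⟩
    by_cases hbdd : BddBelow S
    · have hbT : BddBelow T := by
        obtain ⟨m, hm⟩ := hbdd
        refine ⟨m, fun y hy => ?_⟩
        obtain ⟨y', hy', hle⟩ := h1 y hy
        exact le_trans (hm hy') hle
      apply le_antisymm
      · apply le_csInf hT
        intro y hy
        obtain ⟨y', hy', hle⟩ := h1 y hy
        exact le_trans (csInf_le hbdd hy') hle
      · apply le_csInf ⟨y₀, hy₀⟩
        intro y hy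
        apply le_of_forall_pos_le_add
        intro η hη
        obtain ⟨y'', hy'', hle⟩ := h2 y hy η hη
        exact le_trans (csInf_le hbT hy'') hle
    · have hbT : ¬ BddBelow T := by
        intro ⟨m, hm⟩
        apply hbdd
        refine ⟨m - 1, fun y hy => ?_⟩
        obtain ⟨y'', hy'', hle⟩ := h2 y hy 1 one_pos
        have := hm hy''
        linarith
      rw [Real.sInf_of_not_bddBelow hbdd, Real.sInf_of_not_bddBelow hbT]

section Aux

variable (p : 𝒵 → 𝒳 → ℛ → ℝ) (w : ℛh → 𝒵 → 𝒳 → ℝ)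

lemma pZX_nonneg (hp : IsPMF p) (z : 𝒵) (x : 𝒳) : 0 ≤ pZX p z x :=
  Finset.sum_nonneg fun r _ => hp.1 z x r

lemma pX_eq (x : 𝒳) : pX p x = ∑ z, pZX p z x := rfl

lemma pZ_eq (z : 𝒵) : pZ p z = ∑ x, pZX p z x := rfl

lemma pZX_le_pX (hp : IsPMF p) (z : 𝒵) (x : 𝒳) : pZX p z x ≤ pX p x := by
  rw [pX_eq]
  exact Finset.single_le_sum (fun z' _ => pZX_nonneg p hp z' x) (Finset.mem_univ z)

lemma pZX_le_pZ (hp : IsPMF p) (z : 𝒵) (x : 𝒳) : pZX p z x ≤ pZ p z := by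
  rw [pZ_eq]
  exact Finset.single_le_sum (fun x' _ => pZX_nonneg p hp z x') (Finset.mem_univ x)

lemma sum_pZX (hp : IsPMF p) : ∑ z, ∑ x, pZX p z x = 1 := hp.2

lemma qJ_nonneg (hp : IsPMF p) (hw : IsChannel w) (rh : ℛh) (z : 𝒵) (x : 𝒳) :
    0 ≤ qJ p w rh z x := mul_nonneg (hw.1 rh z x).1 (pZX_nonneg p hp z x)

lemma sum_qJ_rh (hw : IsChannel w) (z : 𝒵) (x : 𝒳) :
    ∑ rh, qJ p w rh z x = pZX p z x := by
  simp only [qJ, ← Finset.sum_mul, hw.2 z x, one_mul]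

lemma sum_qRhZ (hw : IsChannel w) (z : 𝒵) : ∑ rh, qRhZ p w rh z = pZ p z := by
  simp only [qRhZ, pZ_eq]
  rw [Finset.sum_comm]
  exact Finset.sum_congr rfl fun x _ => sum_qJ_rh p w hw z x

lemma sum_qRh (hp : IsPMF p) (hw : IsChannel w) : ∑ rh, qRh p w rh = 1 := by
  simp only [qRh]
  rw [Finset.sum_comm]
  rw [show ∑ z, ∑ rh, ∑ x, qJ p w rh z x = ∑ z, ∑ x, ∑ rh, qJ p w rh z x from
    Finset.sum_congr rfl fun z _ => Finset.sum_comm]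
  rw [Finset.sum_congr rfl fun z _ => Finset.sum_congr rfl fun x _ => sum_qJ_rh p w hw z x]
  exact hp.2

lemma qJ_le_qRhX (hp : IsPMF p) (hw : IsChannel w) (rh : ℛh) (z : 𝒵) (x : 𝒳) :
    qJ p w rh z x ≤ qRhX p w rh x :=
  Finset.single_le_sum (fun z' _ => qJ_nonneg p w hp hw rh z' x) (Finset.mem_univ z)

lemma qJ_le_qRhZ (hp : IsPMF p) (hw : IsChannel w) (rh : ℛh) (z : 𝒵) (x : 𝒳) :
    qJ p w rh z x ≤ qRhZ p w rh z :=
  Finset.single_le_sum (fun x' _ => qJ_nonneg p w hp hw rh z x') (Finset.mem_univ x)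

lemma qJ_le_qRh (hp : IsPMF p) (hw : IsChannel w) (rh : ℛh) (z : 𝒵) (x : 𝒳) :
    qJ p w rh z x ≤ qRh p w rh := by
  calc qJ p w rh z x ≤ qRhZ p w rh z := qJ_le_qRhZ p w hp hw rh z x
  _ ≤ qRh p w rh := by
      rw [show qRh p w rh = ∑ z, qRhZ p w rh z from rfl]
      exact Finset.single_le_sum (fun z' _ => Finset.sum_nonneg fun x' _ =>
        qJ_nonneg p w hp hw rh z' x') (Finset.mem_univ z)

lemma qRhX_nonneg (hp : IsPMF p) (hw : IsChannel w) (rh : ℛh) (x : 𝒳) :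
    0 ≤ qRhX p w rh x := Finset.sum_nonneg fun z _ => qJ_nonneg p w hp hw rh z x

lemma qRhZ_nonneg (hp : IsPMF p) (hw : IsChannel w) (rh : ℛh) (z : 𝒵) :
    0 ≤ qRhZ p w rh z := Finset.sum_nonneg fun x _ => qJ_nonneg p w hp hw rh z x

lemma qRh_nonneg (hp : IsPMF p) (hw : IsChannel w) (rh : ℛh) :
    0 ≤ qRh p w rh := Finset.sum_nonneg fun z _ => qRhZ_nonneg p w hp hw rh z

/-- Optimal `q₁`. -/
def q1s : ℛh → ℝ := qRh p w

/-- Optimal `q₂`. -/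
def q2s : 𝒵 → ℛh → 𝒳 → ℝ := fun z rh x =>
  if 0 < qRhX p w rh x then qJ p w rh z x / qRhX p w rh x else (Fintype.card 𝒵 : ℝ)⁻¹

/-- Optimal `q₃`. -/
def q3s : ℛh → 𝒵 → ℝ := fun rh z =>
  if 0 < pZ p z then qRhZ p w rh z / pZ p z else (Fintype.card ℛh : ℝ)⁻¹

/-- The part of `fObj` not depending on `q₁ q₂ q₃`. -/
def fBase (d : ℛh → ℛ → ℝ) (μ₁ μ₂ : ℝ) : ℝ :=
  ∑ rh, ∑ z, ∑ x,
    if 0 < pZX p z x then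
      pZX p z x * w rh z x * ((∑ r, (p z x r / pZX p z x) * d rh r)
        + (μ₁ + μ₂) * Real.logb 2 (w rh z x))
    else 0

lemma decomp (hp : IsPMF p) (d : ℛh → ℛ → ℝ) (μ₁ μ₂ ε δ : ℝ)
    (q₁ : ℛh → ℝ) (q₂ : 𝒵 → ℛh → 𝒳 → ℝ) (q₃ : ℛh → 𝒵 → ℝ) :
    fObj p d μ₁ μ₂ ε δ w q₁ q₂ q₃ = fBase p w d μ₁ μ₂ + θconst p μ₁ μ₂ ε δ
      - μ₁ * ∑ rh, qRh p w rh * Real.logb 2 (q₁ rh)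
      - μ₁ * ∑ rh, ∑ x, ∑ z, qJ p w rh z x * Real.logb 2 (q₂ z rh x)
      - μ₂ * ∑ z, ∑ rh, qRhZ p w rh z * Real.logb 2 (q₃ rh z) := by
  have key : ∀ rh z x,
      (if 0 < pZX p z x then
        pZX p z x * w rh z x *
          ((∑ r, (p z x r / pZX p z x) * d rh r)
            + (μ₁ + μ₂) * Real.logb 2 (w rh z x)
            - μ₁ * Real.logb 2 (q₁ rh) - μ₁ * Real.logb 2 (q₂ z rh x)
            - μ₂ * Real.logb 2 (q₃ rh z))
      else 0)
      = (if 0 < pZX p z x then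
          pZX p z x * w rh z x * ((∑ r, (p z x r / pZX p z x) * d rh r)
            + (μ₁ + μ₂) * Real.logb 2 (w rh z x)) else 0)
        - μ₁ * (qJ p w rh z x * Real.logb 2 (q₁ rh))
        - μ₁ * (qJ p w rh z x * Real.logb 2 (q₂ z rh x))
        - μ₂ * (qJ p w rh z x * Real.logb 2 (q₃ rh z)) := by
    intro rh z x
    by_cases h : 0 < pZX p z x
    · simp only [if_pos h, qJ]
      ring
    · have h0 : pZX p z x = 0 := le_antisymm (not_lt.mp h) (pZX_nonneg p hp z x)
      simp [h, h0, qJ]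
  have e1 : ∑ rh, ∑ z, ∑ x, qJ p w rh z x * Real.logb 2 (q₁ rh)
      = ∑ rh, qRh p w rh * Real.logb 2 (q₁ rh) := by
    simp only [qRh, Finset.sum_mul]
  have e2 : ∑ rh, ∑ z, ∑ x, qJ p w rh z x * Real.logb 2 (q₂ z rh x)
      = ∑ rh, ∑ x, ∑ z, qJ p w rh z x * Real.logb 2 (q₂ z rh x) :=
    Finset.sum_congr rfl fun rh _ => Finset.sum_comm
  have e3 : ∑ rh, ∑ z, ∑ x, qJ p w rh z x * Real.logb 2 (q₃ rh z)
      = ∑ z, ∑ rh, qRhZ p w rh z * Real.logb 2 (q₃ rh z) := by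
    rw [Finset.sum_comm]
    exact Finset.sum_congr rfl fun z _ => Finset.sum_congr rfl fun rh _ =>
      (Finset.sum_mul _ _ _).symm
  rw [fObj, fBase]
  simp only [key, Finset.sum_sub_distrib, ← Finset.mul_sum, e1, e2, e3]
  ring

end Aux

section Aux2

variable (p : 𝒵 → 𝒳 → ℛ → ℝ) (w : ℛh → 𝒵 → 𝒳 → ℝ)

lemma A1_le (hp : IsPMF p) (hw : IsChannel w) (q₁ : ℛh → ℝ) (hq₁ : PosPMF1 q₁) :
    ∑ rh, qRh p w rh * Real.logb 2 (q₁ rh)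
      ≤ ∑ rh, qRh p w rh * Real.logb 2 (q1s p w rh) := by
  simp only [q1s]
  exact klb _ _ (fun rh => qRh_nonneg p w hp hw rh) hq₁.1
    (by rw [hq₁.2, sum_qRh p w hp hw])

lemma A2_le (hp : IsPMF p) (hw : IsChannel w) (q₂ : 𝒵 → ℛh → 𝒳 → ℝ) (hq₂ : PosPMF2 q₂) :
    ∑ rh, ∑ x, ∑ z, qJ p w rh z x * Real.logb 2 (q₂ z rh x)
      ≤ ∑ rh, ∑ x, ∑ z, qJ p w rh z x * Real.logb 2 (q2s p w z rh x) := by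
  refine Finset.sum_le_sum fun rh _ => Finset.sum_le_sum fun x _ => ?_
  have h := klb_cond (fun z => qJ p w rh z x) (fun z => q₂ z rh x)
    (fun z => qJ_nonneg p w hp hw rh z x) (fun z => hq₂.1 z rh x) (hq₂.2 rh x)
  have e : ∀ z, qJ p w rh z x * Real.logb 2 (qJ p w rh z x / ∑ z', qJ p w rh z' x)
      = qJ p w rh z x * Real.logb 2 (q2s p w z rh x) := by
    intro z
    by_cases hM : 0 < qRhX p w rh x
    · rw [q2s, if_pos hM]; rfl
    · have hM0 : qRhX p w rh x = 0 :=
        le_antisymm (not_lt.mp hM) (qRhX_nonneg p w hp hw rh x)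
      have hq0 : qJ p w rh z x = 0 :=
        le_antisymm (hM0 ▸ qJ_le_qRhX p w hp hw rh z x) (qJ_nonneg p w hp hw rh z x)
      simp [hq0]
  calc ∑ z, qJ p w rh z x * Real.logb 2 (q₂ z rh x)
      ≤ ∑ z, qJ p w rh z x * Real.logb 2 (qJ p w rh z x / ∑ z', qJ p w rh z' x) := h
    _ = _ := Finset.sum_congr rfl fun z _ => e z

lemma qRhZ_le_pZ (hp : IsPMF p) (hw : IsChannel w) (rh : ℛh) (z : 𝒵) :
    qRhZ p w rh z ≤ pZ p z := by
  rw [← sum_qRhZ p w hw z]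
  exact Finset.single_le_sum (fun rh' _ => qRhZ_nonneg p w hp hw rh' z) (Finset.mem_univ rh)

lemma A3_le (hp : IsPMF p) (hw : IsChannel w) (q₃ : ℛh → 𝒵 → ℝ) (hq₃ : PosPMF3 q₃) :
    ∑ z, ∑ rh, qRhZ p w rh z * Real.logb 2 (q₃ rh z)
      ≤ ∑ z, ∑ rh, qRhZ p w rh z * Real.logb 2 (q3s p w rh z) := by
  refine Finset.sum_le_sum fun z _ => ?_
  have h := klb_cond (fun rh => qRhZ p w rh z) (fun rh => q₃ rh z)
    (fun rh => qRhZ_nonneg p w hp hw rh z) (fun rh => hq₃.1 rh z) (hq₃.2 z)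
  have e : ∀ rh, qRhZ p w rh z * Real.logb 2 (qRhZ p w rh z / ∑ rh', qRhZ p w rh' z)
      = qRhZ p w rh z * Real.logb 2 (q3s p w rh z) := by
    intro rh
    by_cases hM : 0 < pZ p z
    · rw [q3s, if_pos hM, sum_qRhZ p w hw z]
    · have hM0 : pZ p z = 0 := le_antisymm (not_lt.mp hM) (by
        rw [pZ_eq]; exact Finset.sum_nonneg fun x _ => pZX_nonneg p hp z x)
      have hq0 : qRhZ p w rh z = 0 :=
        le_antisymm (hM0 ▸ qRhZ_le_pZ p w hp hw rh z) (qRhZ_nonneg p w hp hw rh z)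
      simp [hq0]
  calc ∑ rh, qRhZ p w rh z * Real.logb 2 (q₃ rh z)
      ≤ ∑ rh, qRhZ p w rh z * Real.logb 2 (qRhZ p w rh z / ∑ rh', qRhZ p w rh' z) := h
    _ = _ := Finset.sum_congr rfl fun rh _ => e rh

lemma fObj_star_le (hp : IsPMF p) (hw : IsChannel w) (d : ℛh → ℛ → ℝ)
    (μ₁ μ₂ : ℝ) (hμ₁ : 0 ≤ μ₁) (hμ₂ : 0 ≤ μ₂) (ε δ : ℝ)
    (q₁ : ℛh → ℝ) (q₂ : 𝒵 → ℛh → 𝒳 → ℝ) (q₃ : ℛh → 𝒵 → ℝ)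
    (hq₁ : PosPMF1 q₁) (hq₂ : PosPMF2 q₂) (hq₃ : PosPMF3 q₃) :
    fObj p d μ₁ μ₂ ε δ w (q1s p w) (q2s p w) (q3s p w) ≤ fObj p d μ₁ μ₂ ε δ w q₁ q₂ q₃ := by
  rw [decomp p w hp d μ₁ μ₂ ε δ q₁ q₂ q₃,
    decomp p w hp d μ₁ μ₂ ε δ (q1s p w) (q2s p w) (q3s p w)]
  have h1 := mul_le_mul_of_nonneg_left (A1_le p w hp hw q₁ hq₁) hμ₁
  have h2 := mul_le_mul_of_nonneg_left (A2_le p w hp hw q₂ hq₂) hμ₁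
  have h3 := mul_le_mul_of_nonneg_left (A3_le p w hp hw q₃ hq₃) hμ₂
  linarith

end Aux2

section Aux3

variable (p : 𝒵 → 𝒳 → ℛ → ℝ) (w : ℛh → 𝒵 → 𝒳 → ℝ)

lemma pointwise_id (hp : IsPMF p) (hw : IsChannel w) (d : ℛh → ℛ → ℝ) (μ₁ μ₂ : ℝ)
    (rh : ℛh) (z : 𝒵) (x : 𝒳) :
    (if 0 < pZX p z x then
      pZX p z x * w rh z x *
        ((∑ r, (p z x r / pZX p z x) * d rh r)
          + (μ₁ + μ₂) * Real.logb 2 (w rh z x)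
          - μ₁ * Real.logb 2 (q1s p w rh) - μ₁ * Real.logb 2 (q2s p w z rh x)
          - μ₂ * Real.logb 2 (q3s p w rh z))
    else 0)
    = (∑ r, w rh z x * p z x r * d rh r)
      + qJ p w rh z x *
        (μ₁ * Real.logb 2 (qRhX p w rh x / (qRh p w rh * pX p x))
          + μ₂ * Real.logb 2 (qJ p w rh z x / (qRhZ p w rh z * pX p x))
          - (μ₁ + μ₂) * Real.logb 2 (pZX p z x / (pZ p z * pX p x))
          - μ₁ * Real.logb 2 (pZ p z)) := by
  by_cases hpzx : 0 < pZX p z x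
  · by_cases hw0 : 0 < w rh z x
    · have hq : 0 < qJ p w rh z x := mul_pos hw0 hpzx
      have hM : 0 < qRhX p w rh x := lt_of_lt_of_le hq (qJ_le_qRhX p w hp hw rh z x)
      have hQR : 0 < qRh p w rh := lt_of_lt_of_le hq (qJ_le_qRh p w hp hw rh z x)
      have hQZ : 0 < qRhZ p w rh z := lt_of_lt_of_le hq (qJ_le_qRhZ p w hp hw rh z x)
      have hpz : 0 < pZ p z := lt_of_lt_of_le hpzx (pZX_le_pZ p hp z x)
      have hpx : 0 < pX p x := lt_of_lt_of_le hpzx (pZX_le_pX p hp z x)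
      have hD : pZX p z x * w rh z x * (∑ r, (p z x r / pZX p z x) * d rh r)
          = ∑ r, w rh z x * p z x r * d rh r := by
        rw [Finset.mul_sum]
        refine Finset.sum_congr rfl fun r _ => ?_
        field_simp
      have hlogqJ : Real.logb 2 (qJ p w rh z x)
          = Real.logb 2 (w rh z x) + Real.logb 2 (pZX p z x) := by
        rw [qJ, Real.logb_mul (ne_of_gt hw0) (ne_of_gt hpzx)]
      rw [if_pos hpzx, q1s, q2s, if_pos hM, q3s, if_pos hpz,
        Real.logb_div (ne_of_gt hq) (ne_of_gt hM),
        Real.logb_div (ne_of_gt hQZ) (ne_of_gt hpz),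
        Real.logb_div (ne_of_gt hM) (ne_of_gt (mul_pos hQR hpx)),
        Real.logb_mul (ne_of_gt hQR) (ne_of_gt hpx),
        Real.logb_div (ne_of_gt hq) (ne_of_gt (mul_pos hQZ hpx)),
        Real.logb_mul (ne_of_gt hQZ) (ne_of_gt hpx),
        Real.logb_div (ne_of_gt hpzx) (ne_of_gt (mul_pos hpz hpx)),
        Real.logb_mul (ne_of_gt hpz) (ne_of_gt hpx),
        hlogqJ, qJ]
      linear_combination hD
    · have hw00 : w rh z x = 0 := le_antisymm (not_lt.mp hw0) (hw.1 rh z x).1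
      simp [hw00, qJ]
  · have h0 : pZX p z x = 0 := le_antisymm (not_lt.mp hpzx) (pZX_nonneg p hp z x)
    have hpr : ∀ r, p z x r = 0 := fun r =>
      (Finset.sum_eq_zero_iff_of_nonneg (fun r _ => hp.1 z x r)).mp h0 r (Finset.mem_univ r)
    simp [hpzx, qJ, h0, hpr]

lemma fObj_star_eq (hp : IsPMF p) (hw : IsChannel w) (d : ℛh → ℛ → ℝ)
    (μ₁ μ₂ ε δ : ℝ) :
    fObj p d μ₁ μ₂ ε δ w (q1s p w) (q2s p w) (q3s p w) = gObj p d μ₁ μ₂ ε δ w := by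
  have hT1 : IRhX p w = ∑ rh, ∑ z, ∑ x,
      qJ p w rh z x * Real.logb 2 (qRhX p w rh x / (qRh p w rh * pX p x)) := by
    rw [IRhX]
    refine Finset.sum_congr rfl fun rh _ => ?_
    calc ∑ x, qRhX p w rh x * Real.logb 2 (qRhX p w rh x / (qRh p w rh * pX p x))
        = ∑ x, ∑ z, qJ p w rh z x * Real.logb 2 (qRhX p w rh x / (qRh p w rh * pX p x)) :=
          Finset.sum_congr rfl fun x _ => by rw [qRhX, Finset.sum_mul]
      _ = _ := Finset.sum_comm
  have hT3 : IZX p = ∑ rh, ∑ z, ∑ x,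
      qJ p w rh z x * Real.logb 2 (pZX p z x / (pZ p z * pX p x)) := by
    rw [IZX]
    calc ∑ z, ∑ x, pZX p z x * Real.logb 2 (pZX p z x / (pZ p z * pX p x))
        = ∑ z, ∑ x, ∑ rh, qJ p w rh z x * Real.logb 2 (pZX p z x / (pZ p z * pX p x)) :=
          Finset.sum_congr rfl fun z _ => Finset.sum_congr rfl fun x _ => by
            rw [← sum_qJ_rh p w hw z x, Finset.sum_mul]
      _ = ∑ z, ∑ rh, ∑ x, _ := Finset.sum_congr rfl fun z _ => Finset.sum_comm
      _ = _ := Finset.sum_comm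
  have hT4 : HZ p = -∑ rh, ∑ z, ∑ x, qJ p w rh z x * Real.logb 2 (pZ p z) := by
    rw [HZ]
    congr 1
    calc ∑ z, pZ p z * Real.logb 2 (pZ p z)
        = ∑ z, ∑ rh, qRhZ p w rh z * Real.logb 2 (pZ p z) :=
          Finset.sum_congr rfl fun z _ => by rw [← sum_qRhZ p w hw z, Finset.sum_mul]
      _ = ∑ z, ∑ rh, ∑ x, qJ p w rh z x * Real.logb 2 (pZ p z) :=
          Finset.sum_congr rfl fun z _ => Finset.sum_congr rfl fun rh _ => by
            rw [qRhZ, Finset.sum_mul]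
      _ = _ := Finset.sum_comm
  have hMain : (∑ rh, ∑ z, ∑ x,
      if 0 < pZX p z x then
        pZX p z x * w rh z x *
          ((∑ r, (p z x r / pZX p z x) * d rh r)
            + (μ₁ + μ₂) * Real.logb 2 (w rh z x)
            - μ₁ * Real.logb 2 (q1s p w rh) - μ₁ * Real.logb 2 (q2s p w z rh x)
            - μ₂ * Real.logb 2 (q3s p w rh z))
      else 0)
      = expDist p w d + μ₁ * IRhX p w + μ₂ * IRhZX p w - (μ₁ + μ₂) * IZX p
        + μ₁ * HZ p := by
    have hpt : ∀ rh ∈ (Finset.univ : Finset ℛh), ∀ z ∈ (Finset.univ : Finset 𝒵),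
        ∀ x ∈ (Finset.univ : Finset 𝒳), (if 0 < pZX p z x then
        pZX p z x * w rh z x *
          ((∑ r, (p z x r / pZX p z x) * d rh r)
            + (μ₁ + μ₂) * Real.logb 2 (w rh z x)
            - μ₁ * Real.logb 2 (q1s p w rh) - μ₁ * Real.logb 2 (q2s p w z rh x)
            - μ₂ * Real.logb 2 (q3s p w rh z))
        else 0)
        = (∑ r, w rh z x * p z x r * d rh r)
          + (μ₁ * (qJ p w rh z x * Real.logb 2 (qRhX p w rh x / (qRh p w rh * pX p x)))
            + μ₂ * (qJ p w rh z x * Real.logb 2 (qJ p w rh z x / (qRhZ p w rh z * pX p x)))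
            - (μ₁ + μ₂) * (qJ p w rh z x * Real.logb 2 (pZX p z x / (pZ p z * pX p x)))
            - μ₁ * (qJ p w rh z x * Real.logb 2 (pZ p z))) := by
      intro rh _ z _ x _
      rw [pointwise_id p w hp hw d μ₁ μ₂ rh z x]
      ring
    rw [Finset.sum_congr rfl fun rh hrh => Finset.sum_congr rfl fun z hz =>
      Finset.sum_congr rfl fun x hx => hpt rh hrh z hz x hx]
    simp only [Finset.sum_add_distrib, Finset.sum_sub_distrib, ← Finset.mul_sum]
    rw [← hT1, ← hT3]
    rw [show (∑ rh, ∑ z, ∑ x, qJ p w rh z x *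
        Real.logb 2 (qJ p w rh z x / (qRhZ p w rh z * pX p x))) = IRhZX p w from rfl]
    rw [show (∑ rh, ∑ z, ∑ x, ∑ r, w rh z x * p z x r * d rh r) = expDist p w d from rfl]
    have : ∑ rh, ∑ z, ∑ x, qJ p w rh z x * Real.logb 2 (pZ p z) = -HZ p := by
      rw [hT4]; ring
    rw [this]
    ring
  rw [fObj, hMain, gObj, θconst]
  ring

end Aux3

section Aux4

variable (p : 𝒵 → 𝒳 → ℛ → ℝ) (w : ℛh → 𝒵 → 𝒳 → ℝ)

lemma pert_pt (a s t' τ : ℝ) (hτ1 : τ < 1) (ha : 0 ≤ a) (hs : 0 < a → 0 < s)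
    (ht : (1 - τ) * s ≤ t') :
    a * Real.logb 2 s - a * Real.logb 2 t' ≤ a * (-(Real.logb 2 (1 - τ))) := by
  rcases eq_or_lt_of_le ha with h | h
  · simp [← h]
  · have hs' := hs h
    have h1τ : (0:ℝ) < 1 - τ := by linarith
    have hts : 0 < (1 - τ) * s := mul_pos h1τ hs'
    have hlb : Real.logb 2 ((1 - τ) * s) ≤ Real.logb 2 t' :=
      Real.logb_le_logb_of_le (by norm_num) hts ht
    rw [Real.logb_mul (ne_of_gt h1τ) (ne_of_gt hs')] at hlb
    nlinarith

/-- Perturbed `q₁`. -/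
def q1t (τ : ℝ) : ℛh → ℝ := fun rh => (1 - τ) * q1s p w rh + τ * (Fintype.card ℛh : ℝ)⁻¹

/-- Perturbed `q₂`. -/
def q2t (τ : ℝ) : 𝒵 → ℛh → 𝒳 → ℝ := fun z rh x =>
  (1 - τ) * q2s p w z rh x + τ * (Fintype.card 𝒵 : ℝ)⁻¹

/-- Perturbed `q₃`. -/
def q3t (τ : ℝ) : ℛh → 𝒵 → ℝ := fun rh z =>
  (1 - τ) * q3s p w rh z + τ * (Fintype.card ℛh : ℝ)⁻¹

lemma q2s_nonneg (hp : IsPMF p) (hw : IsChannel w) (z : 𝒵) (rh : ℛh) (x : 𝒳) :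
    0 ≤ q2s p w z rh x := by
  rw [q2s]; split
  · exact div_nonneg (qJ_nonneg p w hp hw rh z x) (qRhX_nonneg p w hp hw rh x)
  · positivity

lemma q3s_nonneg (hp : IsPMF p) (hw : IsChannel w) (rh : ℛh) (z : 𝒵) :
    0 ≤ q3s p w rh z := by
  rw [q3s]; split
  · exact div_nonneg (qRhZ_nonneg p w hp hw rh z) (by positivity)
  · positivity

lemma qt_feasible (hp : IsPMF p) (hw : IsChannel w) (hRh : Nonempty ℛh) (h𝒵 : Nonempty 𝒵)
    (τ : ℝ) (hτ : 0 < τ) (hτ1 : τ < 1) :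
    PosPMF1 (q1t p w τ) ∧ PosPMF2 (q2t p w τ) ∧ PosPMF3 (q3t p w τ) := by
  have h1τ : (0:ℝ) ≤ 1 - τ := by linarith
  have hcRh : (0:ℝ) < (Fintype.card ℛh : ℝ) := by
    exact_mod_cast Fintype.card_pos_iff.mpr hRh
  have hc𝒵 : (0:ℝ) < (Fintype.card 𝒵 : ℝ) := by
    exact_mod_cast Fintype.card_pos_iff.mpr h𝒵
  have hconstRh : ∑ _rh : ℛh, (Fintype.card ℛh : ℝ)⁻¹ = 1 := by
    rw [Finset.sum_const, Finset.card_univ, nsmul_eq_mul, mul_inv_cancel₀ (ne_of_gt hcRh)]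
  have hconst𝒵 : ∑ _z : 𝒵, (Fintype.card 𝒵 : ℝ)⁻¹ = 1 := by
    rw [Finset.sum_const, Finset.card_univ, nsmul_eq_mul, mul_inv_cancel₀ (ne_of_gt hc𝒵)]
  refine ⟨⟨fun rh => ?_, ?_⟩, ⟨fun z rh x => ?_, fun rh x => ?_⟩, ⟨fun rh z => ?_, fun z => ?_⟩⟩
  · have := qRh_nonneg p w hp hw rh
    simp only [q1t, q1s]; positivity
  · simp only [q1t, q1s]
    rw [Finset.sum_add_distrib, ← Finset.mul_sum, ← Finset.mul_sum,
      sum_qRh p w hp hw, hconstRh]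
    ring
  · have := q2s_nonneg p w hp hw z rh x
    simp only [q2t]; positivity
  · simp only [q2t]
    have hsum : ∑ z, q2s p w z rh x = 1 := by
      by_cases hM : 0 < qRhX p w rh x
      · simp only [q2s, if_pos hM]
        rw [← Finset.sum_div, show (∑ z, qJ p w rh z x) = qRhX p w rh x from rfl,
          div_self (ne_of_gt hM)]
      · simp only [q2s, if_neg hM]
        exact hconst𝒵
    rw [Finset.sum_add_distrib, ← Finset.mul_sum, ← Finset.mul_sum, hsum, hconst𝒵]
    ring
  · have := q3s_nonneg p w hp hw rh z
    simp only [q3t]; positivity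
  · simp only [q3t]
    have hsum : ∑ rh, q3s p w rh z = 1 := by
      by_cases hM : 0 < pZ p z
      · simp only [q3s, if_pos hM]
        rw [← Finset.sum_div, sum_qRhZ p w hw z, div_self (ne_of_gt hM)]
      · simp only [q3s, if_neg hM]
        exact hconstRh
    rw [Finset.sum_add_distrib, ← Finset.mul_sum, ← Finset.mul_sum, hsum, hconstRh]
    ring

end Aux4

section Aux5

variable (p : 𝒵 → 𝒳 → ℛ → ℝ) (w : ℛh → 𝒵 → 𝒳 → ℝ)

lemma pert_main (hp : IsPMF p) (hw : IsChannel w) (d : ℛh → ℛ → ℝ)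
    (μ₁ μ₂ : ℝ) (hμ₁ : 0 ≤ μ₁) (hμ₂ : 0 ≤ μ₂) (ε δ : ℝ)
    (τ : ℝ) (hτ : 0 < τ) (hτ1 : τ < 1) :
    fObj p d μ₁ μ₂ ε δ w (q1t p w τ) (q2t p w τ) (q3t p w τ)
      ≤ gObj p d μ₁ μ₂ ε δ w + (2 * μ₁ + μ₂) * (-(Real.logb 2 (1 - τ))) := by
  have hinvRh : (0:ℝ) ≤ (Fintype.card ℛh : ℝ)⁻¹ := by positivity
  have hinv𝒵 : (0:ℝ) ≤ (Fintype.card 𝒵 : ℝ)⁻¹ := by positivity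
  set L := -(Real.logb 2 (1 - τ)) with hL
  have B1 : ∑ rh, qRh p w rh * Real.logb 2 (q1s p w rh)
      - ∑ rh, qRh p w rh * Real.logb 2 (q1t p w τ rh) ≤ L := by
    have h := Finset.sum_le_sum (fun rh (_ : rh ∈ Finset.univ) =>
      pert_pt (qRh p w rh) (q1s p w rh) (q1t p w τ rh) τ hτ1
        (qRh_nonneg p w hp hw rh) (fun h => h) (by
          simp only [q1t]
          have : 0 ≤ τ * (Fintype.card ℛh : ℝ)⁻¹ := mul_nonneg (le_of_lt hτ) hinvRh
          linarith))
    rw [Finset.sum_sub_distrib, ← Finset.sum_mul, sum_qRh p w hp hw, one_mul] at h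
    exact h
  have B2 : ∑ rh, ∑ x, ∑ z, qJ p w rh z x * Real.logb 2 (q2s p w z rh x)
      - ∑ rh, ∑ x, ∑ z, qJ p w rh z x * Real.logb 2 (q2t p w τ z rh x) ≤ L := by
    have hq2tot : ∑ rh, ∑ x, ∑ z, qJ p w rh z x = 1 := by
      rw [Finset.sum_congr rfl fun rh (_ : rh ∈ Finset.univ) =>
        (Finset.sum_comm : ∑ x, ∑ z, qJ p w rh z x = ∑ z, ∑ x, qJ p w rh z x)]
      exact sum_qRh p w hp hw
    have h := Finset.sum_le_sum (fun rh (_ : rh ∈ Finset.univ) =>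
      Finset.sum_le_sum (fun x (_ : x ∈ Finset.univ) =>
      Finset.sum_le_sum (fun z (_ : z ∈ Finset.univ) =>
      pert_pt (qJ p w rh z x) (q2s p w z rh x) (q2t p w τ z rh x) τ hτ1
        (qJ_nonneg p w hp hw rh z x)
        (fun hq => by
          have hM : 0 < qRhX p w rh x := lt_of_lt_of_le hq (qJ_le_qRhX p w hp hw rh z x)
          rw [q2s, if_pos hM]
          exact div_pos hq hM)
        (by
          simp only [q2t]
          have : 0 ≤ τ * (Fintype.card 𝒵 : ℝ)⁻¹ := mul_nonneg (le_of_lt hτ) hinv𝒵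
          linarith))))
    simp only [Finset.sum_sub_distrib, ← Finset.sum_mul] at h
    rw [hq2tot, one_mul] at h
    exact h
  have B3 : ∑ z, ∑ rh, qRhZ p w rh z * Real.logb 2 (q3s p w rh z)
      - ∑ z, ∑ rh, qRhZ p w rh z * Real.logb 2 (q3t p w τ rh z) ≤ L := by
    have hq3tot : ∑ z, ∑ rh, qRhZ p w rh z = 1 := by
      rw [Finset.sum_congr rfl fun z _ => sum_qRhZ p w hw z]
      rw [Finset.sum_congr rfl fun z (_ : z ∈ Finset.univ) => pZ_eq p z]
      exact hp.2
    have h := Finset.sum_le_sum (fun z (_ : z ∈ Finset.univ) =>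
      Finset.sum_le_sum (fun rh (_ : rh ∈ Finset.univ) =>
      pert_pt (qRhZ p w rh z) (q3s p w rh z) (q3t p w τ rh z) τ hτ1
        (qRhZ_nonneg p w hp hw rh z)
        (fun hq => by
          have hM : 0 < pZ p z := lt_of_lt_of_le hq (qRhZ_le_pZ p w hp hw rh z)
          rw [q3s, if_pos hM]
          exact div_pos hq hM)
        (by
          simp only [q3t]
          have : 0 ≤ τ * (Fintype.card ℛh : ℝ)⁻¹ := mul_nonneg (le_of_lt hτ) hinvRh
          linarith)))
    simp only [Finset.sum_sub_distrib, ← Finset.sum_mul] at h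
    rw [hq3tot, one_mul] at h
    exact h
  rw [← fObj_star_eq p w hp hw d μ₁ μ₂ ε δ,
    decomp p w hp d μ₁ μ₂ ε δ (q1t p w τ) (q2t p w τ) (q3t p w τ),
    decomp p w hp d μ₁ μ₂ ε δ (q1s p w) (q2s p w) (q3s p w)]
  have h1 := mul_le_mul_of_nonneg_left B1 hμ₁
  have h2 := mul_le_mul_of_nonneg_left B2 hμ₁
  have h3 := mul_le_mul_of_nonneg_left B3 hμ₂
  rw [mul_sub] at h1 h2 h3
  linarith

end Aux5
/-- The infimum of `g(w)` over all channels `w` equals the infimum of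
`f(w; q₁; q₂; q₃)` over all channels `w`, strictly positive pmfs `q₁` on `ℛ̂`, strictly
positive conditional pmfs `q₂(·|r̂,x)` on `𝒵`, and strictly positive conditional pmfs
`q₃(·|z)` on `ℛ̂`. -/
theorem statement3
    (p : 𝒵 → 𝒳 → ℛ → ℝ) (hp : IsPMF p)
    (d : ℛh → ℛ → ℝ) (hd : ∀ rh r, 0 ≤ d rh r)
    (μ₁ μ₂ : ℝ) (hμ₁ : 0 ≤ μ₁) (hμ₂ : 0 ≤ μ₂) (ε δ : ℝ) :
    sInf {y : ℝ | ∃ w : ℛh → 𝒵 → 𝒳 → ℝ, IsChannel w ∧ y = gObj p d μ₁ μ₂ ε δ w} =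
    sInf {y : ℝ | ∃ (w : ℛh → 𝒵 → 𝒳 → ℝ) (q₁ : ℛh → ℝ) (q₂ : 𝒵 → ℛh → 𝒳 → ℝ)
        (q₃ : ℛh → 𝒵 → ℝ), IsChannel w ∧ PosPMF1 q₁ ∧ PosPMF2 q₂ ∧ PosPMF3 q₃ ∧
        y = fObj p d μ₁ μ₂ ε δ w q₁ q₂ q₃} := by
  have h𝒵 : Nonempty 𝒵 := by
    by_contra h
    rw [not_nonempty_iff] at h
    have h2 := hp.2
    rw [Finset.univ_eq_empty, Finset.sum_empty] at h2
    norm_num at h2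
  have h𝒳 : Nonempty 𝒳 := by
    by_contra h
    rw [not_nonempty_iff] at h
    have h2 := hp.2
    simp only [Finset.univ_eq_empty (α := 𝒳), Finset.sum_empty] at h2
    norm_num at h2
  apply inf_glue
  · rintro y ⟨w, q₁, q₂, q₃, hw, hq₁, hq₂, hq₃, rfl⟩
    refine ⟨gObj p d μ₁ μ₂ ε δ w, ⟨w, hw, rfl⟩, ?_⟩
    rw [← fObj_star_eq p w hp hw d μ₁ μ₂ ε δ]
    exact fObj_star_le p w hp hw d μ₁ μ₂ hμ₁ hμ₂ ε δ q₁ q₂ q₃ hq₁ hq₂ hq₃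
  · rintro y ⟨w, hw, rfl⟩ η hη
    have hRh : Nonempty ℛh := by
      by_contra h
      rw [not_nonempty_iff] at h
      have h2 := hw.2 (Classical.arbitrary 𝒵) (Classical.arbitrary 𝒳)
      rw [Finset.univ_eq_empty, Finset.sum_empty] at h2
      norm_num at h2
    set C : ℝ := 2 * μ₁ + μ₂ with hCdef
    have hC : 0 ≤ C := by positivity
    set s : ℝ := η / (C + 1) with hsdef
    have hs : 0 < s := div_pos hη (by linarith)
    set τ : ℝ := 1 - (2:ℝ) ^ (-s) with hτdef
    have h2s : (0:ℝ) < (2:ℝ) ^ (-s) := Real.rpow_pos_of_pos two_pos _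
    have h2s1 : (2:ℝ) ^ (-s) < 1 :=
      Real.rpow_lt_one_of_one_lt_of_neg one_lt_two (by linarith)
    have hτ : 0 < τ := by rw [hτdef]; linarith
    have hτ1 : τ < 1 := by rw [hτdef]; linarith
    have hlog : Real.logb 2 (1 - τ) = -s := by
      rw [hτdef, sub_sub_cancel]
      exact Real.logb_rpow two_pos (by norm_num)
    obtain ⟨hq1f, hq2f, hq3f⟩ := qt_feasible p w hp hw hRh h𝒵 τ hτ hτ1
    refine ⟨fObj p d μ₁ μ₂ ε δ w (q1t p w τ) (q2t p w τ) (q3t p w τ),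
      ⟨w, q1t p w τ, q2t p w τ, q3t p w τ, hw, hq1f, hq2f, hq3f, rfl⟩, ?_⟩
    have hb := pert_main p w hp hw d μ₁ μ₂ hμ₁ hμ₂ ε δ τ hτ hτ1
    rw [hlog, neg_neg] at hb
    have hcs : C * s ≤ η := by
      rw [hsdef]
      rw [show C * (η / (C + 1)) = η * (C / (C + 1)) by ring]
      have h1 : C / (C + 1) ≤ 1 := by
        rw [div_le_one (by linarith)]; linarith
      nlinarith
    calc fObj p d μ₁ μ₂ ε δ w (q1t p w τ) (q2t p w τ) (q3t p w τ)
        ≤ gObj p d μ₁ μ₂ ε δ w + (2 * μ₁ + μ₂) * s := hb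
      _ ≤ gObj p d μ₁ μ₂ ε δ w + η := by rw [← hCdef]; linarith

end
end

section
/- Assume μ₁ + μ₂ > 0 and p(z,x) > 0 for all (z,x). Let w be a channel with w(r̂|z,x) > 0 for all (r̂,z,x), and let q₁*(r̂) = ∑_{z,x} w(r̂|z,x)p(z,x), q₂*(z|r̂,x) = w(r̂|z,x)p(z|x) / ∑_{z'} w(r̂|z',x)p(z'|x), q₃*(r̂|z) = ∑_x w(r̂|z,x)p(x|z) be the distributions induced by w. Suppose that for every (z,x) and every r̂: w(r̂|z,x) = (1/η(z,x))·[ q₁*(r̂)^{μ₁} · q₂*(z|r̂,x)^{μ₁} · q₃*(r̂|z)^{μ₂} · 2^{−∑_r p(r|z,x) d(r̂,r)} ]^{1/(μ₁+μ₂)}, where η(z,x) is the normalizing constant making ∑_{r̂} w(r̂|z,x) = 1. Then w is a global minimizer of g: g(w) ≤ g(w') for every channel w'. -/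
open Real Finset

noncomputable section

variable {𝒵 𝒳 ℛ ℛh : Type} [Fintype 𝒵] [Fintype 𝒳] [Fintype ℛ] [Fintype ℛh]

/-- The conditional `p(z|x)`. -/
def pZgX (p : 𝒵 → 𝒳 → ℛ → ℝ) (z : 𝒵) (x : 𝒳) : ℝ := pZX p z x / pX p x

/-- The conditional `p(x|z)`. -/
def pXgZ (p : 𝒵 → 𝒳 → ℛ → ℝ) (x : 𝒳) (z : 𝒵) : ℝ := pZX p z x / pZ p z

/-- The distribution `q₁*(r̂) = ∑_{z,x} w(r̂|z,x) p(z,x)` induced by `w`. -/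
def q1star (p : 𝒵 → 𝒳 → ℛ → ℝ) (w : ℛh → 𝒵 → 𝒳 → ℝ) (rh : ℛh) : ℝ :=
  ∑ z, ∑ x, w rh z x * pZX p z x

/-- The conditional `q₂*(z|r̂,x) = w(r̂|z,x) p(z|x) / ∑_{z'} w(r̂|z',x) p(z'|x)` induced by `w`. -/
def q2star (p : 𝒵 → 𝒳 → ℛ → ℝ) (w : ℛh → 𝒵 → 𝒳 → ℝ) (z : 𝒵) (rh : ℛh) (x : 𝒳) : ℝ :=
  w rh z x * pZgX p z x / ∑ z', w rh z' x * pZgX p z' x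

/-- The conditional `q₃*(r̂|z) = ∑_x w(r̂|z,x) p(x|z)` induced by `w`. -/
def q3star (p : 𝒵 → 𝒳 → ℛ → ℝ) (w : ℛh → 𝒵 → 𝒳 → ℝ) (rh : ℛh) (z : 𝒵) : ℝ :=
  ∑ x, w rh z x * pXgZ p x z

/-- The Blahut–Arimoto kernel
`K(r̂,z,x) = [ q₁(r̂)^{μ₁} q₂(z|r̂,x)^{μ₁} q₃(r̂|z)^{μ₂} 2^{−∑_r p(r|z,x) d(r̂,r)} ]^{1/(μ₁+μ₂)}`. -/
def BAker (p : 𝒵 → 𝒳 → ℛ → ℝ) (d : ℛh → ℛ → ℝ) (μ₁ μ₂ : ℝ)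
    (q₁ : ℛh → ℝ) (q₂ : 𝒵 → ℛh → 𝒳 → ℝ) (q₃ : ℛh → 𝒵 → ℝ)
    (rh : ℛh) (z : 𝒵) (x : 𝒳) : ℝ :=
  (q₁ rh ^ μ₁ * q₂ z rh x ^ μ₁ * q₃ rh z ^ μ₂ *
      (2 : ℝ) ^ (-(∑ r, (p z x r / pZX p z x) * d rh r))) ^ (1 / (μ₁ + μ₂))

/-- The normalisation factor `η(z,x) = ∑_{r̂} K(r̂,z,x)`. -/
def BAeta (p : 𝒵 → 𝒳 → ℛ → ℝ) (d : ℛh → ℛ → ℝ) (μ₁ μ₂ : ℝ)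
    (q₁ : ℛh → ℝ) (q₂ : 𝒵 → ℛh → 𝒳 → ℝ) (q₃ : ℛh → 𝒵 → ℝ) (z : 𝒵) (x : 𝒳) : ℝ :=
  ∑ rh, BAker p d μ₁ μ₂ q₁ q₂ q₃ rh z x

/-! ### Auxiliary lemmas for the proof of Statement 5 -/
set_option linter.unusedSectionVars false

lemma logb_rpow_of_pos' {x : ℝ} (hx : 0 < x) (y : ℝ) : logb 2 (x ^ y) = y * logb 2 x := by
  rw [logb, logb, Real.log_rpow hx]; ring

lemma gibbs_pt (a b : ℝ) (ha : 0 ≤ a) (hb : 0 ≤ b) (hab : 0 < a → 0 < b) :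
    (a - b) / Real.log 2 ≤ a * logb 2 (a / b) := by
  have hL : 0 < Real.log 2 := Real.log_pos one_lt_two
  rcases ha.eq_or_lt with h | h
  · rw [← h]
    simp only [zero_mul, zero_sub]
    exact div_nonpos_of_nonpos_of_nonneg (by linarith) hL.le
  · have hb' := hab h
    have h1 : Real.log (b / a) ≤ b / a - 1 := Real.log_le_sub_one_of_pos (div_pos hb' h)
    have h2 : 1 - b / a ≤ Real.log (a / b) := by
      have hlog : Real.log (a / b) = -Real.log (b / a) := by
        rw [← Real.log_inv, inv_div]
      rw [hlog]; linarith
    have h3 : a - b ≤ a * Real.log (a / b) := by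
      have hm := mul_le_mul_of_nonneg_left h2 h.le
      have he : a * (1 - b / a) = a - b := by field_simp
      linarith [he ▸ hm]
    calc (a - b) / Real.log 2 ≤ (a * Real.log (a / b)) / Real.log 2 :=
          (div_le_div_iff_of_pos_right hL).mpr h3
      _ = a * logb 2 (a / b) := by rw [logb]; ring

/-- Conditional expected distortion `∑_r p(r|z,x) d(r̂,r)`. -/
def cE (p : 𝒵 → 𝒳 → ℛ → ℝ) (d : ℛh → ℛ → ℝ) (rh : ℛh) (z : 𝒵) (x : 𝒳) : ℝ :=
  ∑ r, (p z x r / pZX p z x) * d rh r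

lemma gObj_eq (p : 𝒵 → 𝒳 → ℛ → ℝ) (hpZX : ∀ z x, 0 < pZX p z x)
    (d : ℛh → ℛ → ℝ) (μ₁ μ₂ ε δ : ℝ) (v : ℛh → 𝒵 → 𝒳 → ℝ) :
    gObj p d μ₁ μ₂ ε δ v =
      (∑ rh, ∑ z, ∑ x, qJ p v rh z x *
        (cE p d rh z x
          + μ₁ * logb 2 (qRhX p v rh x / (qRh p v rh * pX p x))
          + μ₂ * logb 2 (qJ p v rh z x / (qRhZ p v rh z * pX p x))))
      - μ₁ * ε - μ₂ * δ := by
  have hdist : expDist p v d = ∑ rh, ∑ z, ∑ x, qJ p v rh z x * cE p d rh z x := by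
    unfold expDist
    refine Finset.sum_congr rfl fun rh _ => Finset.sum_congr rfl fun z _ =>
      Finset.sum_congr rfl fun x _ => ?_
    simp only [qJ, cE, Finset.mul_sum]
    refine Finset.sum_congr rfl fun r _ => ?_
    have h := (hpZX z x).ne'
    field_simp
  have hI1 : IRhX p v = ∑ rh, ∑ z, ∑ x,
      qJ p v rh z x * logb 2 (qRhX p v rh x / (qRh p v rh * pX p x)) := by
    unfold IRhX
    refine Finset.sum_congr rfl fun rh _ => ?_
    rw [Finset.sum_comm]
    refine Finset.sum_congr rfl fun x _ => ?_
    rw [qRhX, Finset.sum_mul]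
  rw [gObj, hdist, hI1, IRhZX]
  simp only [mul_add, Finset.sum_add_distrib, mul_left_comm, ← Finset.mul_sum]
  ring

lemma q1star_eq (p : 𝒵 → 𝒳 → ℛ → ℝ) (w : ℛh → 𝒵 → 𝒳 → ℝ) (rh : ℛh) :
    q1star p w rh = qRh p w rh := rfl

lemma q2star_eq (p : 𝒵 → 𝒳 → ℛ → ℝ) (w : ℛh → 𝒵 → 𝒳 → ℝ) (z : 𝒵) (rh : ℛh) (x : 𝒳)
    (hpX : 0 < pX p x) (hq : 0 < qRhX p w rh x) :
    q2star p w z rh x = qJ p w rh z x / qRhX p w rh x := by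
  have hden : ∑ z', w rh z' x * pZgX p z' x = qRhX p w rh x / pX p x := by
    simp only [qRhX, qJ, pZgX, Finset.sum_div, mul_div_assoc]
  rw [q2star, hden, pZgX, qJ]
  field_simp

lemma q3star_eq (p : 𝒵 → 𝒳 → ℛ → ℝ) (w : ℛh → 𝒵 → 𝒳 → ℝ) (rh : ℛh) (z : 𝒵) :
    q3star p w rh z = qRhZ p w rh z / pZ p z := by
  simp only [q3star, pXgZ, qRhZ, qJ, Finset.sum_div, mul_div_assoc]

lemma key_const [Nonempty 𝒵] [Nonempty 𝒳] [Nonempty ℛh]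
    (p : 𝒵 → 𝒳 → ℛ → ℝ) (hpZX : ∀ z x, 0 < pZX p z x)
    (d : ℛh → ℛ → ℝ) (μ₁ μ₂ : ℝ) (hμ : 0 < μ₁ + μ₂)
    (w : ℛh → 𝒵 → 𝒳 → ℝ) (hwpos : ∀ rh z x, 0 < w rh z x)
    (hfix : ∀ rh z x,
      w rh z x =
        (1 / BAeta p d μ₁ μ₂ (q1star p w) (q2star p w) (q3star p w) z x) *
          BAker p d μ₁ μ₂ (q1star p w) (q2star p w) (q3star p w) rh z x)
    (rh : ℛh) (z : 𝒵) (x : 𝒳) :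
    cE p d rh z x + μ₁ * logb 2 (qRhX p w rh x / (qRh p w rh * pX p x))
      + μ₂ * logb 2 (qJ p w rh z x / (qRhZ p w rh z * pX p x))
    = μ₁ * (logb 2 (pZX p z x) - logb 2 (pX p x))
      + μ₂ * (logb 2 (pZX p z x) - logb 2 (pZ p z) - logb 2 (pX p x))
      - (μ₁ + μ₂) * logb 2 (BAeta p d μ₁ μ₂ (q1star p w) (q2star p w) (q3star p w) z x) := by
  have hpX : 0 < pX p x := Finset.sum_pos (fun z' _ => hpZX z' x) Finset.univ_nonempty
  have hpZ : 0 < pZ p z := Finset.sum_pos (fun x' _ => hpZX z x') Finset.univ_nonempty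
  have hqJ : ∀ rh' z' x', 0 < qJ p w rh' z' x' := fun rh' z' x' =>
    mul_pos (hwpos rh' z' x') (hpZX z' x')
  have hqRhX : ∀ rh', 0 < qRhX p w rh' x := fun rh' =>
    Finset.sum_pos (fun z' _ => hqJ rh' z' x) Finset.univ_nonempty
  have hqRh : 0 < qRh p w rh :=
    Finset.sum_pos (fun z' _ => Finset.sum_pos (fun x' _ => hqJ rh z' x') Finset.univ_nonempty)
      Finset.univ_nonempty
  have hqRhZ : 0 < qRhZ p w rh z :=
    Finset.sum_pos (fun x' _ => hqJ rh z x') Finset.univ_nonempty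
  have hq1 : ∀ rh', 0 < q1star p w rh' := fun rh' => by
    rw [q1star_eq]
    exact Finset.sum_pos (fun z' _ => Finset.sum_pos (fun x' _ => hqJ rh' z' x')
      Finset.univ_nonempty) Finset.univ_nonempty
  have hq2 : ∀ rh' z', 0 < q2star p w z' rh' x := fun rh' z' => by
    rw [q2star_eq p w z' rh' x hpX (hqRhX rh')]
    exact div_pos (hqJ rh' z' x) (hqRhX rh')
  have hq3 : ∀ rh' z', 0 < q3star p w rh' z' := fun rh' z' => by
    rw [q3star_eq]
    have : 0 < pZ p z' := Finset.sum_pos (fun x' _ => hpZX z' x') Finset.univ_nonempty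
    exact div_pos (Finset.sum_pos (fun x' _ => hqJ rh' z' x') Finset.univ_nonempty) this
  have hbase : ∀ rh', 0 < q1star p w rh' ^ μ₁ * q2star p w z rh' x ^ μ₁ *
      q3star p w rh' z ^ μ₂ * (2:ℝ) ^ (-(∑ r, (p z x r / pZX p z x) * d rh' r)) := fun rh' =>
    mul_pos (mul_pos (mul_pos (Real.rpow_pos_of_pos (hq1 rh') _)
      (Real.rpow_pos_of_pos (hq2 rh' z) _)) (Real.rpow_pos_of_pos (hq3 rh' z) _))
      (Real.rpow_pos_of_pos two_pos _)
  have hK : ∀ rh', 0 < BAker p d μ₁ μ₂ (q1star p w) (q2star p w) (q3star p w) rh' z x :=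
    fun rh' => Real.rpow_pos_of_pos (hbase rh') _
  have hη : 0 < BAeta p d μ₁ μ₂ (q1star p w) (q2star p w) (q3star p w) z x :=
    Finset.sum_pos (fun rh' _ => hK rh') Finset.univ_nonempty
  have hKw : BAker p d μ₁ μ₂ (q1star p w) (q2star p w) (q3star p w) rh z x
      = w rh z x * BAeta p d μ₁ μ₂ (q1star p w) (q2star p w) (q3star p w) z x := by
    rw [hfix rh z x]
    field_simp
  have hlogK : logb 2 (BAker p d μ₁ μ₂ (q1star p w) (q2star p w) (q3star p w) rh z x)
      = (1 / (μ₁ + μ₂)) * (μ₁ * logb 2 (q1star p w rh) + μ₁ * logb 2 (q2star p w z rh x)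
          + μ₂ * logb 2 (q3star p w rh z) - cE p d rh z x) := by
    have e1 := Real.rpow_pos_of_pos (hq1 rh) μ₁
    have e2 := Real.rpow_pos_of_pos (hq2 rh z) μ₁
    have e3 := Real.rpow_pos_of_pos (hq3 rh z) μ₂
    have e4 := Real.rpow_pos_of_pos (two_pos (α := ℝ)) (-(∑ r, (p z x r / pZX p z x) * d rh r))
    rw [BAker, logb_rpow_of_pos' (hbase rh),
      Real.logb_mul (mul_pos (mul_pos e1 e2) e3).ne' e4.ne',
      Real.logb_mul (mul_pos e1 e2).ne' e3.ne',
      Real.logb_mul e1.ne' e2.ne',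
      logb_rpow_of_pos' (hq1 rh), logb_rpow_of_pos' (hq2 rh z), logb_rpow_of_pos' (hq3 rh z),
      logb_rpow_of_pos' two_pos, Real.logb_self_eq_one one_lt_two]
    rw [show (∑ r, (p z x r / pZX p z x) * d rh r) = cE p d rh z x from rfl]
    ring
  have hcE : cE p d rh z x = μ₁ * logb 2 (q1star p w rh) + μ₁ * logb 2 (q2star p w z rh x)
      + μ₂ * logb 2 (q3star p w rh z)
      - (μ₁ + μ₂) * (logb 2 (w rh z x)
          + logb 2 (BAeta p d μ₁ μ₂ (q1star p w) (q2star p w) (q3star p w) z x)) := by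
    have h2 : logb 2 (BAker p d μ₁ μ₂ (q1star p w) (q2star p w) (q3star p w) rh z x)
        = logb 2 (w rh z x)
          + logb 2 (BAeta p d μ₁ μ₂ (q1star p w) (q2star p w) (q3star p w) z x) := by
      rw [hKw, Real.logb_mul (hwpos rh z x).ne' hη.ne']
    rw [hlogK] at h2
    have hμ' : (μ₁ + μ₂) ≠ 0 := hμ.ne'
    field_simp at h2
    linarith
  rw [hcE, q1star_eq, q2star_eq p w z rh x hpX (hqRhX rh), q3star_eq,
    Real.logb_div (hqJ rh z x).ne' (hqRhX rh).ne',
    Real.logb_div hqRhZ.ne' hpZ.ne',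
    Real.logb_div (hqRhX rh).ne' (mul_pos hqRh hpX).ne',
    Real.logb_mul hqRh.ne' hpX.ne',
    Real.logb_div (hqJ rh z x).ne' (mul_pos hqRhZ hpX).ne',
    Real.logb_mul hqRhZ.ne' hpX.ne',
    show qJ p w rh z x = w rh z x * pZX p z x from rfl,
    Real.logb_mul (hwpos rh z x).ne' (hpZX z x).ne']
  ring

/-- Assume `μ₁ + μ₂ > 0` and `p(z,x) > 0` for all `(z,x)`.  If a strictly
positive channel `w` satisfies the self-consistency (fixed-point) equation
`w(r̂|z,x) = (1/η(z,x)) [ q₁*(r̂)^{μ₁} q₂*(z|r̂,x)^{μ₁} q₃*(r̂|z)^{μ₂}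
  2^{−∑_r p(r|z,x) d(r̂,r)} ]^{1/(μ₁+μ₂)}`,
where `q₁*, q₂*, q₃*` are the distributions induced by `w` itself, then `w` is a global
minimiser of `g`: `g(w) ≤ g(w')` for every channel `w'`. -/
theorem statement5
    (p : 𝒵 → 𝒳 → ℛ → ℝ) (hp : IsPMF p) (hpZX : ∀ z x, 0 < pZX p z x)
    (d : ℛh → ℛ → ℝ) (hd : ∀ rh r, 0 ≤ d rh r)
    (μ₁ μ₂ : ℝ) (hμ₁ : 0 ≤ μ₁) (hμ₂ : 0 ≤ μ₂) (hμ : 0 < μ₁ + μ₂) (ε δ : ℝ)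
    (w : ℛh → 𝒵 → 𝒳 → ℝ) (hw : IsChannel w) (hwpos : ∀ rh z x, 0 < w rh z x)
    (hfix : ∀ rh z x,
      w rh z x =
        (1 / BAeta p d μ₁ μ₂ (q1star p w) (q2star p w) (q3star p w) z x) *
          BAker p d μ₁ μ₂ (q1star p w) (q2star p w) (q3star p w) rh z x) :
    ∀ w' : ℛh → 𝒵 → 𝒳 → ℝ, IsChannel w' →
      gObj p d μ₁ μ₂ ε δ w ≤ gObj p d μ₁ μ₂ ε δ w' := by
  intro w' hw'
  rcases isEmpty_or_nonempty 𝒵 with hZe | hZn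
  · exact le_of_eq (by simp [gObj, expDist, IRhX, IRhZX, qRhX, qRh, qRhZ, qJ])
  rcases isEmpty_or_nonempty 𝒳 with hXe | hXn
  · exact le_of_eq (by simp [gObj, expDist, IRhX, IRhZX, qRhX, qRh, qRhZ, qJ])
  have hRh : Nonempty ℛh := by
    by_contra h
    rw [not_nonempty_iff] at h
    have h1 := hw.2 (Classical.arbitrary 𝒵) (Classical.arbitrary 𝒳)
    rw [Finset.univ_eq_empty, Finset.sum_empty] at h1
    exact one_ne_zero h1.symm
  have hpXpos : ∀ x, 0 < pX p x := fun x =>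
    Finset.sum_pos (fun z _ => hpZX z x) Finset.univ_nonempty
  have hpZpos : ∀ z, 0 < pZ p z := fun z =>
    Finset.sum_pos (fun x _ => hpZX z x) Finset.univ_nonempty
  have hqJpos : ∀ rh z x, 0 < qJ p w rh z x := fun rh z x =>
    mul_pos (hwpos rh z x) (hpZX z x)
  have hqRhXw : ∀ rh x, 0 < qRhX p w rh x := fun rh x =>
    Finset.sum_pos (fun z _ => hqJpos rh z x) Finset.univ_nonempty
  have hqRhw : ∀ rh, 0 < qRh p w rh := fun rh =>
    Finset.sum_pos (fun z _ => Finset.sum_pos (fun x _ => hqJpos rh z x)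
      Finset.univ_nonempty) Finset.univ_nonempty
  have hqRhZw : ∀ rh z, 0 < qRhZ p w rh z := fun rh z =>
    Finset.sum_pos (fun x _ => hqJpos rh z x) Finset.univ_nonempty
  have hqJ' : ∀ rh z x, 0 ≤ qJ p w' rh z x := fun rh z x =>
    mul_nonneg (hw'.1 rh z x).1 (hpZX z x).le
  have hqRhX' : ∀ rh x, 0 ≤ qRhX p w' rh x := fun rh x =>
    Finset.sum_nonneg fun z _ => hqJ' rh z x
  have hqRh' : ∀ rh, 0 ≤ qRh p w' rh := fun rh =>
    Finset.sum_nonneg fun z _ => Finset.sum_nonneg fun x _ => hqJ' rh z x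
  have hqRhZ' : ∀ rh z, 0 ≤ qRhZ p w' rh z := fun rh z =>
    Finset.sum_nonneg fun x _ => hqJ' rh z x
  have hqRh_alt : ∀ (v : ℛh → 𝒵 → 𝒳 → ℝ) rh, ∑ x, qRhX p v rh x = qRh p v rh := by
    intro v rh
    rw [qRh]
    exact Finset.sum_comm
  -- the common value of the coefficient of the fixed-point channel
  have hEv : ∀ v : ℛh → 𝒵 → 𝒳 → ℝ, IsChannel v →
      (∑ rh, ∑ z, ∑ x, qJ p v rh z x *
        (cE p d rh z x
          + μ₁ * logb 2 (qRhX p w rh x / (qRh p w rh * pX p x))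
          + μ₂ * logb 2 (qJ p w rh z x / (qRhZ p w rh z * pX p x))))
      = ∑ z, ∑ x, pZX p z x *
          (μ₁ * (logb 2 (pZX p z x) - logb 2 (pX p x))
            + μ₂ * (logb 2 (pZX p z x) - logb 2 (pZ p z) - logb 2 (pX p x))
            - (μ₁ + μ₂) *
                logb 2 (BAeta p d μ₁ μ₂ (q1star p w) (q2star p w) (q3star p w) z x)) := by
    intro v hv
    rw [Finset.sum_congr rfl (fun rh _ => Finset.sum_congr rfl (fun z _ =>
      Finset.sum_congr rfl (fun x _ => by
        rw [key_const p hpZX d μ₁ μ₂ hμ w hwpos hfix rh z x])))]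
    rw [Finset.sum_comm]
    refine Finset.sum_congr rfl fun z _ => ?_
    rw [Finset.sum_comm]
    refine Finset.sum_congr rfl fun x _ => ?_
    simp only [qJ]
    rw [← Finset.sum_mul, ← Finset.sum_mul, hv.2 z x, one_mul]
  have hposR : ∀ rh x, 0 < qRhX p w' rh x → 0 < qRh p w' rh := fun rh x h => by
    rw [← hqRh_alt w' rh]
    exact Finset.sum_pos' (fun x' _ => hqRhX' rh x') ⟨x, Finset.mem_univ x, h⟩
  have hposZ : ∀ rh z x, 0 < qJ p w' rh z x → 0 < qRhZ p w' rh z := fun rh z x h =>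
    Finset.sum_pos' (fun x' _ => hqJ' rh z x') ⟨x, Finset.mem_univ x, h⟩
  -- first Gibbs inequality
  have hD1 : 0 ≤ ∑ rh, ∑ x, qRhX p w' rh x *
      (logb 2 (qRhX p w' rh x / (qRh p w' rh * pX p x))
        - logb 2 (qRhX p w rh x / (qRh p w rh * pX p x))) := by
    have hpt : ∀ rh x,
        (qRhX p w' rh x - qRh p w' rh * qRhX p w rh x / qRh p w rh) / Real.log 2
          ≤ qRhX p w' rh x *
            (logb 2 (qRhX p w' rh x / (qRh p w' rh * pX p x))
              - logb 2 (qRhX p w rh x / (qRh p w rh * pX p x))) := by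
      intro rh x
      have hb : 0 ≤ qRh p w' rh * qRhX p w rh x / qRh p w rh :=
        div_nonneg (mul_nonneg (hqRh' rh) (hqRhXw rh x).le) (hqRhw rh).le
      have heq : qRhX p w' rh x *
          (logb 2 (qRhX p w' rh x / (qRh p w' rh * pX p x))
            - logb 2 (qRhX p w rh x / (qRh p w rh * pX p x)))
          = qRhX p w' rh x * logb 2 (qRhX p w' rh x /
              (qRh p w' rh * qRhX p w rh x / qRh p w rh)) := by
        rcases (hqRhX' rh x).eq_or_lt with h | h
        · rw [← h]; ring
        · have hq' : 0 < qRh p w' rh := hposR rh x h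
          congr 1
          rw [Real.logb_div h.ne' (mul_pos hq' (hpXpos x)).ne',
            Real.logb_mul hq'.ne' (hpXpos x).ne',
            Real.logb_div (hqRhXw rh x).ne' (mul_pos (hqRhw rh) (hpXpos x)).ne',
            Real.logb_mul (hqRhw rh).ne' (hpXpos x).ne',
            Real.logb_div h.ne' (div_pos (mul_pos hq' (hqRhXw rh x)) (hqRhw rh)).ne',
            Real.logb_div (mul_pos hq' (hqRhXw rh x)).ne' (hqRhw rh).ne',
            Real.logb_mul hq'.ne' (hqRhXw rh x).ne']
          ring
      rw [heq]
      exact gibbs_pt _ _ (hqRhX' rh x) hb fun h =>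
        div_pos (mul_pos (hposR rh x h) (hqRhXw rh x)) (hqRhw rh)
    have hrow : ∀ rh, ∑ x,
        (qRhX p w' rh x - qRh p w' rh * qRhX p w rh x / qRh p w rh) / Real.log 2 = 0 := by
      intro rh
      rw [← Finset.sum_div, Finset.sum_sub_distrib, hqRh_alt w' rh]
      have hb : (∑ x, qRh p w' rh * qRhX p w rh x / qRh p w rh) = qRh p w' rh := by
        rw [← Finset.sum_div, ← Finset.mul_sum, hqRh_alt w rh, mul_div_assoc,
          div_self (hqRhw rh).ne', mul_one]
      rw [hb]
      simp
    calc (0:ℝ) = ∑ rh, ∑ x,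
        (qRhX p w' rh x - qRh p w' rh * qRhX p w rh x / qRh p w rh) / Real.log 2 := by
          rw [Finset.sum_congr rfl fun rh _ => hrow rh]
          simp
      _ ≤ _ := Finset.sum_le_sum fun rh _ => Finset.sum_le_sum fun x _ => hpt rh x
  -- second Gibbs inequality
  have hD2 : 0 ≤ ∑ rh, ∑ z, ∑ x, qJ p w' rh z x *
      (logb 2 (qJ p w' rh z x / (qRhZ p w' rh z * pX p x))
        - logb 2 (qJ p w rh z x / (qRhZ p w rh z * pX p x))) := by
    have hpt : ∀ rh z x,
        (qJ p w' rh z x - qRhZ p w' rh z * qJ p w rh z x / qRhZ p w rh z) / Real.log 2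
          ≤ qJ p w' rh z x *
            (logb 2 (qJ p w' rh z x / (qRhZ p w' rh z * pX p x))
              - logb 2 (qJ p w rh z x / (qRhZ p w rh z * pX p x))) := by
      intro rh z x
      have hb : 0 ≤ qRhZ p w' rh z * qJ p w rh z x / qRhZ p w rh z :=
        div_nonneg (mul_nonneg (hqRhZ' rh z) (hqJpos rh z x).le) (hqRhZw rh z).le
      have heq : qJ p w' rh z x *
          (logb 2 (qJ p w' rh z x / (qRhZ p w' rh z * pX p x))
            - logb 2 (qJ p w rh z x / (qRhZ p w rh z * pX p x)))
          = qJ p w' rh z x * logb 2 (qJ p w' rh z x /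
              (qRhZ p w' rh z * qJ p w rh z x / qRhZ p w rh z)) := by
        rcases (hqJ' rh z x).eq_or_lt with h | h
        · rw [← h]; ring
        · have hq' : 0 < qRhZ p w' rh z := hposZ rh z x h
          congr 1
          rw [Real.logb_div h.ne' (mul_pos hq' (hpXpos x)).ne',
            Real.logb_mul hq'.ne' (hpXpos x).ne',
            Real.logb_div (hqJpos rh z x).ne' (mul_pos (hqRhZw rh z) (hpXpos x)).ne',
            Real.logb_mul (hqRhZw rh z).ne' (hpXpos x).ne',
            Real.logb_div h.ne' (div_pos (mul_pos hq' (hqJpos rh z x)) (hqRhZw rh z)).ne',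
            Real.logb_div (mul_pos hq' (hqJpos rh z x)).ne' (hqRhZw rh z).ne',
            Real.logb_mul hq'.ne' (hqJpos rh z x).ne']
          ring
      rw [heq]
      exact gibbs_pt _ _ (hqJ' rh z x) hb fun h =>
        div_pos (mul_pos (hposZ rh z x h) (hqJpos rh z x)) (hqRhZw rh z)
    have hrow : ∀ rh z, ∑ x,
        (qJ p w' rh z x - qRhZ p w' rh z * qJ p w rh z x / qRhZ p w rh z) / Real.log 2
          = 0 := by
      intro rh z
      rw [← Finset.sum_div, Finset.sum_sub_distrib]
      have ha : (∑ x, qJ p w' rh z x) = qRhZ p w' rh z := rfl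
      have hb : (∑ x, qRhZ p w' rh z * qJ p w rh z x / qRhZ p w rh z) = qRhZ p w' rh z := by
        rw [← Finset.sum_div, ← Finset.mul_sum]
        rw [show (∑ x, qJ p w rh z x) = qRhZ p w rh z from rfl, mul_div_assoc,
          div_self (hqRhZw rh z).ne', mul_one]
      rw [ha, hb]
      simp
    calc (0:ℝ) = ∑ rh, ∑ z, ∑ x,
        (qJ p w' rh z x - qRhZ p w' rh z * qJ p w rh z x / qRhZ p w rh z) / Real.log 2 := by
          rw [Finset.sum_congr rfl fun rh _ => Finset.sum_congr rfl fun z _ => hrow rh z]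
          simp
      _ ≤ _ := Finset.sum_le_sum fun rh _ => Finset.sum_le_sum fun z _ =>
          Finset.sum_le_sum fun x _ => hpt rh z x
  -- collapse the z-sum in the first Gibbs term
  have hcollapse : (∑ rh, ∑ z, ∑ x, qJ p w' rh z x *
      (logb 2 (qRhX p w' rh x / (qRh p w' rh * pX p x))
        - logb 2 (qRhX p w rh x / (qRh p w rh * pX p x))))
      = ∑ rh, ∑ x, qRhX p w' rh x *
        (logb 2 (qRhX p w' rh x / (qRh p w' rh * pX p x))
          - logb 2 (qRhX p w rh x / (qRh p w rh * pX p x))) := by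
    refine Finset.sum_congr rfl fun rh _ => ?_
    rw [Finset.sum_comm]
    refine Finset.sum_congr rfl fun x _ => ?_
    rw [qRhX, Finset.sum_mul]
  -- split the w' objective
  have hS : (∑ rh, ∑ z, ∑ x, qJ p w' rh z x *
        (cE p d rh z x
          + μ₁ * logb 2 (qRhX p w' rh x / (qRh p w' rh * pX p x))
          + μ₂ * logb 2 (qJ p w' rh z x / (qRhZ p w' rh z * pX p x))))
      = (∑ rh, ∑ z, ∑ x, qJ p w' rh z x *
        (cE p d rh z x
          + μ₁ * logb 2 (qRhX p w rh x / (qRh p w rh * pX p x))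
          + μ₂ * logb 2 (qJ p w rh z x / (qRhZ p w rh z * pX p x))))
        + μ₁ * (∑ rh, ∑ z, ∑ x, qJ p w' rh z x *
            (logb 2 (qRhX p w' rh x / (qRh p w' rh * pX p x))
              - logb 2 (qRhX p w rh x / (qRh p w rh * pX p x))))
        + μ₂ * (∑ rh, ∑ z, ∑ x, qJ p w' rh z x *
            (logb 2 (qJ p w' rh z x / (qRhZ p w' rh z * pX p x))
              - logb 2 (qJ p w rh z x / (qRhZ p w rh z * pX p x)))) := by
    rw [Finset.sum_congr rfl (fun rh _ => Finset.sum_congr rfl (fun z _ =>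
      Finset.sum_congr rfl (fun x _ => show qJ p w' rh z x *
        (cE p d rh z x
          + μ₁ * logb 2 (qRhX p w' rh x / (qRh p w' rh * pX p x))
          + μ₂ * logb 2 (qJ p w' rh z x / (qRhZ p w' rh z * pX p x)))
        = qJ p w' rh z x *
        (cE p d rh z x
          + μ₁ * logb 2 (qRhX p w rh x / (qRh p w rh * pX p x))
          + μ₂ * logb 2 (qJ p w rh z x / (qRhZ p w rh z * pX p x)))
        + μ₁ * (qJ p w' rh z x *
            (logb 2 (qRhX p w' rh x / (qRh p w' rh * pX p x))
              - logb 2 (qRhX p w rh x / (qRh p w rh * pX p x))))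
        + μ₂ * (qJ p w' rh z x *
            (logb 2 (qJ p w' rh z x / (qRhZ p w' rh z * pX p x))
              - logb 2 (qJ p w rh z x / (qRhZ p w rh z * pX p x)))) from by ring)))]
    simp only [Finset.sum_add_distrib, ← Finset.mul_sum]
  have h1 : (0:ℝ) ≤ ∑ rh, ∑ z, ∑ x, qJ p w' rh z x *
      (logb 2 (qRhX p w' rh x / (qRh p w' rh * pX p x))
        - logb 2 (qRhX p w rh x / (qRh p w rh * pX p x))) := hcollapse ▸ hD1
  rw [gObj_eq p hpZX d μ₁ μ₂ ε δ w, gObj_eq p hpZX d μ₁ μ₂ ε δ w', hEv w hw, hS, hEv w' hw']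
  nlinarith [mul_nonneg hμ₁ h1, mul_nonneg hμ₂ hD2]


end
end

section
/- Assume μ₁ + μ₂ > 0 and p(z,x) > 0 for all (z,x). Let q₁ be a strictly positive pmf on ℛ̂, q₂(·|r̂,x) strictly positive conditional pmfs on 𝒵, and q₃(·|z) strictly positive conditional pmfs on ℛ̂. Define w'(r̂|z,x) = (1/η(z,x))·[ q₁(r̂)^{μ₁} · q₂(z|r̂,x)^{μ₁} · q₃(r̂|z)^{μ₂} · 2^{−∑_r p(r|z,x) d(r̂,r)} ]^{1/(μ₁+μ₂)}, where η(z,x) is the normalizing constant making ∑_{r̂} w'(r̂|z,x) = 1. Then w' is a (strictly positive) channel and f(w'; q₁; q₂; q₃) ≤ f(w; q₁; q₂; q₃) for every channel w. -/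
open Real Finset

noncomputable section

variable {𝒵 𝒳 ℛ ℛh : Type} [Fintype 𝒵] [Fintype 𝒳] [Fintype ℛ] [Fintype ℛh]

/-- The Blahut–Arimoto update channel
`w'(r̂|z,x) = (1/η(z,x)) K(r̂,z,x)`. -/
def BAw (p : 𝒵 → 𝒳 → ℛ → ℝ) (d : ℛh → ℛ → ℝ) (μ₁ μ₂ : ℝ)
    (q₁ : ℛh → ℝ) (q₂ : 𝒵 → ℛh → 𝒳 → ℝ) (q₃ : ℛh → 𝒵 → ℝ)
    (rh : ℛh) (z : 𝒵) (x : 𝒳) : ℝ :=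
  (1 / BAeta p d μ₁ μ₂ q₁ q₂ q₃ z x) * BAker p d μ₁ μ₂ q₁ q₂ q₃ rh z x

/-! The objective splits over `(z,x)`, and on each slice the bracket of `f` equals
`(μ₁+μ₂)(log₂ w(r̂|z,x) − log₂ K(r̂,z,x))` with `K` the Blahut–Arimoto kernel. Hence, up to the
positive factor `p(z,x)(μ₁+μ₂)`, the slice of `f` is `D(w(·|z,x) ‖ K/η) − log₂ η(z,x)`, and
Gibbs' inequality `D ≥ 0`, with equality at `w(·|z,x) = K/η`, shows that the normalised kernel
minimises every slice at once. -/

set_option linter.unusedSectionVars false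

lemma sub_le_mul_log_sub_log {u v : ℝ} (hu : 0 < u) (hv : 0 ≤ v) :
    v - u ≤ v * (log v - log u) := by
  rcases hv.eq_or_lt with rfl | hv
  · simpa using hu.le
  have h := mul_le_mul_of_nonneg_left (log_le_sub_one_of_pos (div_pos hu hv)) hv.le
  rw [log_div hu.ne' hv.ne', mul_sub_one, mul_div_cancel₀ _ hv.ne'] at h
  linarith

theorem sum_mul_log_sub_log_nonneg {ι : Type*} [Fintype ι] {u v : ι → ℝ}
    (hu : ∀ i, 0 < u i) (hv : ∀ i, 0 ≤ v i) (huv : ∑ i, u i ≤ ∑ i, v i) :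
    0 ≤ ∑ i, v i * (log (v i) - log (u i)) :=
  calc 0 ≤ ∑ i, (v i - u i) := by rw [sum_sub_distrib]; linarith
    _ ≤ _ := sum_le_sum fun i _ => sub_le_mul_log_sub_log (hu i) (hv i)

theorem sum_mul_logb_sub_logb_nonneg {ι : Type*} [Fintype ι] {b : ℝ} (hb : 1 < b)
    {u v : ι → ℝ} (hu : ∀ i, 0 < u i) (hv : ∀ i, 0 ≤ v i) (huv : ∑ i, u i ≤ ∑ i, v i) :
    0 ≤ ∑ i, v i * (logb b (v i) - logb b (u i)) := by
  have h : ∑ i, v i * (logb b (v i) - logb b (u i))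
      = (∑ i, v i * (log (v i) - log (u i))) / log b := by
    rw [sum_div]
    exact sum_congr rfl fun i _ => by simp only [logb]; ring
  rw [h]
  exact div_nonneg (sum_mul_log_sub_log_nonneg hu hv huv) (log_pos hb).le

/-- Gibbs' variational principle. -/
theorem sum_mul_logb_sub_logb_div_sum_le {ι : Type*} [Fintype ι] {b s : ℝ} (hb : 1 < b)
    (hs : 0 ≤ s) {K v : ι → ℝ} (hK : ∀ i, 0 < K i) (hv : ∀ i, 0 ≤ v i) (hv1 : ∑ i, v i = 1) :
    ∑ i, K i / (∑ j, K j) * (s * (logb b (K i / ∑ j, K j) - logb b (K i)))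
      ≤ ∑ i, v i * (s * (logb b (v i) - logb b (K i))) := by
  set Z := ∑ j, K j
  have hZ : 0 < Z :=
    sum_pos (fun i _ => hK i) (nonempty_of_sum_ne_zero (by rw [hv1]; exact one_ne_zero))
  have hlogb (i : ι) : logb b (K i / Z) = logb b (K i) - logb b Z :=
    logb_div (hK i).ne' hZ.ne'
  have hnormalised : ∑ i, K i / Z = 1 := by rw [← sum_div, div_self hZ.ne']
  have hgibbs : 0 ≤ ∑ i, v i * (logb b (v i) - logb b (K i / Z)) :=
    sum_mul_logb_sub_logb_nonneg hb (fun i => div_pos (hK i) hZ) hv (by rw [hnormalised, hv1])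
  calc ∑ i, K i / Z * (s * (logb b (K i / Z) - logb b (K i)))
      = (∑ i, K i / Z) * -(s * logb b Z) := by
        rw [sum_mul]; exact sum_congr rfl fun i _ => by rw [hlogb]; ring
    _ = -(s * logb b Z) := by rw [hnormalised, one_mul]
    _ ≤ s * ∑ i, v i * (logb b (v i) - logb b (K i / Z)) - s * logb b Z := by
        linarith [mul_nonneg hs hgibbs]
    _ = ∑ i, v i * (s * (logb b (v i) - logb b (K i))) := by
        simp_rw [hlogb]
        rw [mul_sum, ← mul_one (s * logb b Z), ← hv1, mul_sum, ← sum_sub_distrib]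
        exact sum_congr rfl fun i _ => by ring

lemma isChannel_of_nonneg_of_sum_eq_one {w : ℛh → 𝒵 → 𝒳 → ℝ} (hw : ∀ rh z x, 0 ≤ w rh z x)
    (hsum : ∀ z x, ∑ rh, w rh z x = 1) : IsChannel w :=
  ⟨fun rh z x => ⟨hw rh z x, hsum z x ▸ single_le_sum (fun i _ => hw i z x) (mem_univ rh)⟩, hsum⟩

section BlahutArimoto

variable (p : 𝒵 → 𝒳 → ℛ → ℝ) (d : ℛh → ℛ → ℝ) (μ₁ μ₂ : ℝ)
  {q₁ : ℛh → ℝ} {q₂ : 𝒵 → ℛh → 𝒳 → ℝ} {q₃ : ℛh → 𝒵 → ℝ}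

lemma BAker_pos (hq₁ : ∀ rh, 0 < q₁ rh) (hq₂ : ∀ z rh x, 0 < q₂ z rh x)
    (hq₃ : ∀ rh z, 0 < q₃ rh z) (rh : ℛh) (z : 𝒵) (x : 𝒳) :
    0 < BAker p d μ₁ μ₂ q₁ q₂ q₃ rh z x := by
  have := hq₁ rh; have := hq₂ z rh x; have := hq₃ rh z
  unfold BAker; positivity

lemma mul_logb_BAker (hμ : μ₁ + μ₂ ≠ 0) (hq₁ : ∀ rh, 0 < q₁ rh)
    (hq₂ : ∀ z rh x, 0 < q₂ z rh x) (hq₃ : ∀ rh z, 0 < q₃ rh z) (rh : ℛh) (z : 𝒵) (x : 𝒳) :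
    (μ₁ + μ₂) * logb 2 (BAker p d μ₁ μ₂ q₁ q₂ q₃ rh z x)
      = μ₁ * logb 2 (q₁ rh) + μ₁ * logb 2 (q₂ z rh x) + μ₂ * logb 2 (q₃ rh z)
        - ∑ r, (p z x r / pZX p z x) * d rh r := by
  have h₁ := hq₁ rh; have h₂ := hq₂ z rh x; have h₃ := hq₃ rh z
  unfold BAker
  rw [logb_rpow_eq_mul_logb_of_pos (by positivity), logb_mul (by positivity) (by positivity),
    logb_mul (by positivity) (by positivity), logb_mul (by positivity) (by positivity),
    logb_rpow_eq_mul_logb_of_pos h₁, logb_rpow_eq_mul_logb_of_pos h₂,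
    logb_rpow_eq_mul_logb_of_pos h₃, logb_rpow two_pos (by norm_num)]
  field_simp
  ring

lemma BAw_eq_div (rh : ℛh) (z : 𝒵) (x : 𝒳) :
    BAw p d μ₁ μ₂ q₁ q₂ q₃ rh z x
      = BAker p d μ₁ μ₂ q₁ q₂ q₃ rh z x / ∑ rh', BAker p d μ₁ μ₂ q₁ q₂ q₃ rh' z x :=
  one_div_mul_eq_div _ _

lemma fObj_eq_sum_mul_logb_sub_logb_BAker (ε δ : ℝ) (hpZX : ∀ z x, 0 < pZX p z x)
    (hμ : μ₁ + μ₂ ≠ 0) (hq₁ : ∀ rh, 0 < q₁ rh) (hq₂ : ∀ z rh x, 0 < q₂ z rh x)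
    (hq₃ : ∀ rh z, 0 < q₃ rh z) (w : ℛh → 𝒵 → 𝒳 → ℝ) :
    fObj p d μ₁ μ₂ ε δ w q₁ q₂ q₃
      = ∑ z, ∑ x, pZX p z x * ∑ rh, w rh z x *
          ((μ₁ + μ₂) * (logb 2 (w rh z x) - logb 2 (BAker p d μ₁ μ₂ q₁ q₂ q₃ rh z x)))
        + θconst p μ₁ μ₂ ε δ := by
  unfold fObj
  congr 1
  rw [sum_comm]
  refine sum_congr rfl fun z _ => ?_
  rw [sum_comm]
  refine sum_congr rfl fun x _ => ?_
  rw [mul_sum]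
  refine sum_congr rfl fun rh _ => ?_
  rw [if_pos (hpZX z x), mul_sub (μ₁ + μ₂), mul_logb_BAker p d μ₁ μ₂ hμ hq₁ hq₂ hq₃]
  ring

end BlahutArimoto

theorem statement6_general
    (p : 𝒵 → 𝒳 → ℛ → ℝ) (hpZX : ∀ z x, 0 < pZX p z x)
    (d : ℛh → ℛ → ℝ)
    (μ₁ μ₂ : ℝ) (hμ : 0 < μ₁ + μ₂) (ε δ : ℝ)
    (q₁ : ℛh → ℝ) (hq₁ : PosPMF1 q₁)
    (q₂ : 𝒵 → ℛh → 𝒳 → ℝ) (hq₂ : PosPMF2 q₂)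
    (q₃ : ℛh → 𝒵 → ℝ) (hq₃ : PosPMF3 q₃) :
    IsChannel (BAw p d μ₁ μ₂ q₁ q₂ q₃) ∧
    (∀ rh z x, 0 < BAw p d μ₁ μ₂ q₁ q₂ q₃ rh z x) ∧
    ∀ w : ℛh → 𝒵 → 𝒳 → ℝ, IsChannel w →
      fObj p d μ₁ μ₂ ε δ (BAw p d μ₁ μ₂ q₁ q₂ q₃) q₁ q₂ q₃ ≤
        fObj p d μ₁ μ₂ ε δ w q₁ q₂ q₃ := by
  have hK := BAker_pos p d μ₁ μ₂ hq₁.1 hq₂.1 hq₃.1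
  have hη (z : 𝒵) (x : 𝒳) : 0 < ∑ rh, BAker p d μ₁ μ₂ q₁ q₂ q₃ rh z x :=
    sum_pos (fun rh _ => hK rh z x) (nonempty_of_sum_ne_zero (by rw [hq₁.2]; exact one_ne_zero))
  have hw'pos (rh : ℛh) (z : 𝒵) (x : 𝒳) : 0 < BAw p d μ₁ μ₂ q₁ q₂ q₃ rh z x := by
    rw [BAw_eq_div]; exact div_pos (hK rh z x) (hη z x)
  have hw'sum (z : 𝒵) (x : 𝒳) : ∑ rh, BAw p d μ₁ μ₂ q₁ q₂ q₃ rh z x = 1 := by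
    simp_rw [BAw_eq_div]; rw [← sum_div, div_self (hη z x).ne']
  refine ⟨isChannel_of_nonneg_of_sum_eq_one (fun rh z x => (hw'pos rh z x).le) hw'sum, hw'pos,
    fun w hw => ?_⟩
  simp only [fObj_eq_sum_mul_logb_sub_logb_BAker p d μ₁ μ₂ ε δ hpZX hμ.ne' hq₁.1 hq₂.1 hq₃.1]
  refine add_le_add_left (sum_le_sum fun z _ => sum_le_sum fun x _ =>
    mul_le_mul_of_nonneg_left ?_ (hpZX z x).le) _
  simp_rw [BAw_eq_div]
  exact sum_mul_logb_sub_logb_div_sum_le one_lt_two hμ.le (fun rh => hK rh z x)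
    (fun rh => (hw.1 rh z x).1) (hw.2 z x)

/-- Assume `μ₁ + μ₂ > 0` and `p(z,x) > 0` for all `(z,x)`.  For strictly
positive `q₁`, `q₂(·|r̂,x)`, `q₃(·|z)`, the Blahut–Arimoto update `w'` is a strictly
positive channel and minimises `f(·; q₁; q₂; q₃)` over all channels:
`f(w'; q₁; q₂; q₃) ≤ f(w; q₁; q₂; q₃)` for every channel `w`. -/
theorem statement6
    (p : 𝒵 → 𝒳 → ℛ → ℝ) (hp : IsPMF p) (hpZX : ∀ z x, 0 < pZX p z x)
    (d : ℛh → ℛ → ℝ) (hd : ∀ rh r, 0 ≤ d rh r)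
    (μ₁ μ₂ : ℝ) (hμ₁ : 0 ≤ μ₁) (hμ₂ : 0 ≤ μ₂) (hμ : 0 < μ₁ + μ₂) (ε δ : ℝ)
    (q₁ : ℛh → ℝ) (hq₁ : PosPMF1 q₁)
    (q₂ : 𝒵 → ℛh → 𝒳 → ℝ) (hq₂ : PosPMF2 q₂)
    (q₃ : ℛh → 𝒵 → ℝ) (hq₃ : PosPMF3 q₃) :
    IsChannel (BAw p d μ₁ μ₂ q₁ q₂ q₃) ∧
    (∀ rh z x, 0 < BAw p d μ₁ μ₂ q₁ q₂ q₃ rh z x) ∧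
    ∀ w : ℛh → 𝒵 → 𝒳 → ℝ, IsChannel w →
      fObj p d μ₁ μ₂ ε δ (BAw p d μ₁ μ₂ q₁ q₂ q₃) q₁ q₂ q₃ ≤
        fObj p d μ₁ μ₂ ε δ w q₁ q₂ q₃ :=
  statement6_general p hpZX d μ₁ μ₂ hμ ε δ q₁ hq₁ q₂ hq₂ q₃ hq₃

end
end

section
/- The minimum expected distortion D(ε,δ) is a jointly convex function of (ε,δ): for pairs (ε₀,δ₀) and (ε₁,δ₁) with nonempty feasible sets and any λ ∈ [0,1], the feasible set at ((1−λ)ε₀+λε₁, (1−λ)δ₀+λδ₁) is nonempty and D((1−λ)ε₀+λε₁, (1−λ)δ₀+λδ₁) ≤ (1−λ)·D(ε₀,δ₀) + λ·D(ε₁,δ₁). -/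
open Real Finset

noncomputable section

variable {𝒵 𝒳 ℛ ℛh : Type} [Fintype 𝒵] [Fintype 𝒳] [Fintype ℛ] [Fintype ℛh]

/-- Feasibility: `w` is a channel with `I(R̂;X) ≤ ε` and `I(R̂,Z;X) ≤ δ`. -/
def Feas (p : 𝒵 → 𝒳 → ℛ → ℝ) (ε δ : ℝ) (w : ℛh → 𝒵 → 𝒳 → ℝ) : Prop :=
  IsChannel w ∧ IRhX p w ≤ ε ∧ IRhZX p w ≤ δ

/-- The minimum expected distortion `D(ε,δ)`: the infimum of `E_q[d(R̂,R)]` over channels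
`w` with `I(R̂;X) ≤ ε` and `I(R̂,Z;X) ≤ δ`. -/
def Dfun (p : 𝒵 → 𝒳 → ℛ → ℝ) (d : ℛh → ℛ → ℝ) (ε δ : ℝ) : ℝ :=
  sInf {y : ℝ | ∃ w : ℛh → 𝒵 → 𝒳 → ℝ, Feas p ε δ w ∧ y = expDist p w d}

/-! ### Auxiliary lemmas -/

lemma my_logsum2 (a₀ a₁ b₀ b₁ : ℝ) (ha₀ : 0 ≤ a₀) (ha₁ : 0 ≤ a₁)
    (hb₀ : 0 ≤ b₀) (hb₁ : 0 ≤ b₁)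
    (h₀ : 0 < a₀ → 0 < b₀) (h₁ : 0 < a₁ → 0 < b₁) :
    (a₀ + a₁) * logb 2 ((a₀ + a₁) / (b₀ + b₁)) ≤
      a₀ * logb 2 (a₀ / b₀) + a₁ * logb 2 (a₁ / b₁) := by
  have hlog2 : (0:ℝ) < Real.log 2 := Real.log_pos one_lt_two
  rcases ha₀.eq_or_lt with h0 | h0
  · rcases ha₁.eq_or_lt with h1 | h1
    · simp [← h0, ← h1]
    · have hb₁' := h₁ h1
      rw [← h0]
      simp only [zero_add, zero_mul]
      have hle : a₁ / (b₀ + b₁) ≤ a₁ / b₁ := by gcongr <;> linarith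
      have hposa : 0 < a₁ / (b₀ + b₁) := by positivity
      have := Real.logb_le_logb_of_le (b := 2) one_lt_two hposa hle
      nlinarith
  · rcases ha₁.eq_or_lt with h1 | h1
    · have hb₀' := h₀ h0
      rw [← h1]
      simp only [add_zero, zero_mul]
      have hle : a₀ / (b₀ + b₁) ≤ a₀ / b₀ := by gcongr <;> linarith
      have hposa : 0 < a₀ / (b₀ + b₁) := by positivity
      have := Real.logb_le_logb_of_le (b := 2) one_lt_two hposa hle
      nlinarith
    · -- both positive: log-sum inequality
      have hb₀' := h₀ h0
      have hb₁' := h₁ h1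
      set s := a₀ + a₁ with hs
      set t := b₀ + b₁ with ht
      have hspos : 0 < s := by positivity
      have htpos : 0 < t := by positivity
      have key : ∀ a b : ℝ, 0 < a → 0 < b →
          a * Real.log (s / t) ≤ a * Real.log (a / b) + (s * b / t - a) := by
        intro a b ha hb
        have hu : 0 < s * b / (t * a) := by positivity
        have hlog := Real.log_le_sub_one_of_pos hu
        have hsplit : Real.log (s / t) = Real.log (a / b) + Real.log (s * b / (t * a)) := by
          rw [← Real.log_mul (by positivity) (by positivity)]
          congr 1
          field_simp
        rw [hsplit]
        have h2 : a * Real.log (s * b / (t * a)) ≤ a * (s * b / (t * a) - 1) :=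
          mul_le_mul_of_nonneg_left hlog ha.le
        have heq : a * (s * b / (t * a) - 1) = s * b / t - a := by
          field_simp
        nlinarith
      have k₀ := key a₀ b₀ h0 hb₀'
      have k₁ := key a₁ b₁ h1 hb₁'
      have hsum : s * b₀ / t + s * b₁ / t = s := by
        field_simp
        ring
      have main : s * Real.log (s / t) ≤
          a₀ * Real.log (a₀ / b₀) + a₁ * Real.log (a₁ / b₁) := by
        have : s * Real.log (s / t) = a₀ * Real.log (s / t) + a₁ * Real.log (s / t) := by
          rw [hs]; ring
        nlinarith
      simp only [Real.logb]
      calc s * (Real.log (s / t) / Real.log 2) = s * Real.log (s / t) / Real.log 2 := by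
            ring
        _ ≤ (a₀ * Real.log (a₀ / b₀) + a₁ * Real.log (a₁ / b₁)) / Real.log 2 := by
            gcongr
        _ = a₀ * (Real.log (a₀ / b₀) / Real.log 2) + a₁ * (Real.log (a₁ / b₁) / Real.log 2) := by
            ring

lemma my_scale_term (c a b : ℝ) (hc : 0 ≤ c) :
    (c * a) * logb 2 ((c * a) / (c * b)) = c * (a * logb 2 (a / b)) := by
  rcases hc.eq_or_lt with h | h
  · simp [← h]
  · rw [mul_div_mul_left _ _ h.ne']
    ring

section aux

variable {𝒵 𝒳 ℛ ℛh : Type} [Fintype 𝒵] [Fintype 𝒳] [Fintype ℛ] [Fintype ℛh]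

lemma my_pZX_nonneg {p : 𝒵 → 𝒳 → ℛ → ℝ} (hp : IsPMF p) (z : 𝒵) (x : 𝒳) :
    0 ≤ pZX p z x :=
  Finset.sum_nonneg fun r _ => hp.1 z x r

lemma my_pX_eq (p : 𝒵 → 𝒳 → ℛ → ℝ) (x : 𝒳) : pX p x = ∑ z, pZX p z x := rfl

lemma my_pX_nonneg {p : 𝒵 → 𝒳 → ℛ → ℝ} (hp : IsPMF p) (x : 𝒳) :
    0 ≤ pX p x :=
  Finset.sum_nonneg fun z _ => my_pZX_nonneg hp z x

lemma my_pZX_le_pX {p : 𝒵 → 𝒳 → ℛ → ℝ} (hp : IsPMF p) (z : 𝒵) (x : 𝒳) :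
    pZX p z x ≤ pX p x := by
  rw [my_pX_eq]
  exact Finset.single_le_sum (fun z' _ => my_pZX_nonneg hp z' x) (Finset.mem_univ z)

lemma my_qJ_nonneg {p : 𝒵 → 𝒳 → ℛ → ℝ} (hp : IsPMF p) {w : ℛh → 𝒵 → 𝒳 → ℝ}
    (hw : IsChannel w) (rh : ℛh) (z : 𝒵) (x : 𝒳) : 0 ≤ qJ p w rh z x :=
  mul_nonneg (hw.1 rh z x).1 (my_pZX_nonneg hp z x)

lemma my_qJ_le_pZX {p : 𝒵 → 𝒳 → ℛ → ℝ} (hp : IsPMF p) {w : ℛh → 𝒵 → 𝒳 → ℝ}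
    (hw : IsChannel w) (rh : ℛh) (z : 𝒵) (x : 𝒳) : qJ p w rh z x ≤ pZX p z x := by
  have := (hw.1 rh z x).2
  have := my_pZX_nonneg hp z x
  unfold qJ
  nlinarith

lemma my_qRhX_nonneg {p : 𝒵 → 𝒳 → ℛ → ℝ} (hp : IsPMF p) {w : ℛh → 𝒵 → 𝒳 → ℝ}
    (hw : IsChannel w) (rh : ℛh) (x : 𝒳) : 0 ≤ qRhX p w rh x :=
  Finset.sum_nonneg fun z _ => my_qJ_nonneg hp hw rh z x

lemma my_qRh_nonneg {p : 𝒵 → 𝒳 → ℛ → ℝ} (hp : IsPMF p) {w : ℛh → 𝒵 → 𝒳 → ℝ}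
    (hw : IsChannel w) (rh : ℛh) : 0 ≤ qRh p w rh :=
  Finset.sum_nonneg fun z _ => Finset.sum_nonneg fun x _ => my_qJ_nonneg hp hw rh z x

lemma my_qRhZ_nonneg {p : 𝒵 → 𝒳 → ℛ → ℝ} (hp : IsPMF p) {w : ℛh → 𝒵 → 𝒳 → ℝ}
    (hw : IsChannel w) (rh : ℛh) (z : 𝒵) : 0 ≤ qRhZ p w rh z :=
  Finset.sum_nonneg fun x _ => my_qJ_nonneg hp hw rh z x

lemma my_qRhX_le_pX {p : 𝒵 → 𝒳 → ℛ → ℝ} (hp : IsPMF p) {w : ℛh → 𝒵 → 𝒳 → ℝ}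
    (hw : IsChannel w) (rh : ℛh) (x : 𝒳) : qRhX p w rh x ≤ pX p x := by
  rw [my_pX_eq]
  exact Finset.sum_le_sum fun z _ => my_qJ_le_pZX hp hw rh z x

lemma my_qRhX_le_qRh {p : 𝒵 → 𝒳 → ℛ → ℝ} (hp : IsPMF p) {w : ℛh → 𝒵 → 𝒳 → ℝ}
    (hw : IsChannel w) (rh : ℛh) (x : 𝒳) : qRhX p w rh x ≤ qRh p w rh := by
  unfold qRhX qRh
  refine Finset.sum_le_sum fun z _ => ?_
  exact Finset.single_le_sum (fun x' _ => my_qJ_nonneg hp hw rh z x') (Finset.mem_univ x)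

lemma my_qJ_le_qRhZ {p : 𝒵 → 𝒳 → ℛ → ℝ} (hp : IsPMF p) {w : ℛh → 𝒵 → 𝒳 → ℝ}
    (hw : IsChannel w) (rh : ℛh) (z : 𝒵) (x : 𝒳) : qJ p w rh z x ≤ qRhZ p w rh z :=
  Finset.single_le_sum (fun x' _ => my_qJ_nonneg hp hw rh z x') (Finset.mem_univ x)

lemma my_qJ_le_pX {p : 𝒵 → 𝒳 → ℛ → ℝ} (hp : IsPMF p) {w : ℛh → 𝒵 → 𝒳 → ℝ}
    (hw : IsChannel w) (rh : ℛh) (z : 𝒵) (x : 𝒳) : qJ p w rh z x ≤ pX p x :=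
  (my_qJ_le_pZX hp hw rh z x).trans (my_pZX_le_pX hp z x)

lemma my_IsChannel_mix {w₀ w₁ : ℛh → 𝒵 → 𝒳 → ℝ} (hw₀ : IsChannel w₀) (hw₁ : IsChannel w₁)
    {lam : ℝ} (h0 : 0 ≤ lam) (h1 : lam ≤ 1) :
    IsChannel (fun rh z x => (1 - lam) * w₀ rh z x + lam * w₁ rh z x) := by
  constructor
  · intro rh z x
    obtain ⟨hw00, hw01⟩ := hw₀.1 rh z x
    obtain ⟨hw10, hw11⟩ := hw₁.1 rh z x
    dsimp only
    constructor
    · nlinarith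
    · nlinarith
  · intro z x
    rw [Finset.sum_add_distrib, ← Finset.mul_sum, ← Finset.mul_sum, hw₀.2, hw₁.2]
    ring

lemma my_qJ_mix (p : 𝒵 → 𝒳 → ℛ → ℝ) (w₀ w₁ : ℛh → 𝒵 → 𝒳 → ℝ) (lam : ℝ)
    (rh : ℛh) (z : 𝒵) (x : 𝒳) :
    qJ p (fun rh z x => (1 - lam) * w₀ rh z x + lam * w₁ rh z x) rh z x =
      (1 - lam) * qJ p w₀ rh z x + lam * qJ p w₁ rh z x := by
  simp only [qJ]
  ring

lemma my_qRhX_mix (p : 𝒵 → 𝒳 → ℛ → ℝ) (w₀ w₁ : ℛh → 𝒵 → 𝒳 → ℝ) (lam : ℝ)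
    (rh : ℛh) (x : 𝒳) :
    qRhX p (fun rh z x => (1 - lam) * w₀ rh z x + lam * w₁ rh z x) rh x =
      (1 - lam) * qRhX p w₀ rh x + lam * qRhX p w₁ rh x := by
  unfold qRhX
  rw [Finset.sum_congr rfl fun z _ => my_qJ_mix p w₀ w₁ lam rh z x,
    Finset.sum_add_distrib, ← Finset.mul_sum, ← Finset.mul_sum]

lemma my_qRhZ_mix (p : 𝒵 → 𝒳 → ℛ → ℝ) (w₀ w₁ : ℛh → 𝒵 → 𝒳 → ℝ) (lam : ℝ)
    (rh : ℛh) (z : 𝒵) :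
    qRhZ p (fun rh z x => (1 - lam) * w₀ rh z x + lam * w₁ rh z x) rh z =
      (1 - lam) * qRhZ p w₀ rh z + lam * qRhZ p w₁ rh z := by
  unfold qRhZ
  rw [Finset.sum_congr rfl fun x _ => my_qJ_mix p w₀ w₁ lam rh z x,
    Finset.sum_add_distrib, ← Finset.mul_sum, ← Finset.mul_sum]

lemma my_qRh_mix (p : 𝒵 → 𝒳 → ℛ → ℝ) (w₀ w₁ : ℛh → 𝒵 → 𝒳 → ℝ) (lam : ℝ)
    (rh : ℛh) :
    qRh p (fun rh z x => (1 - lam) * w₀ rh z x + lam * w₁ rh z x) rh =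
      (1 - lam) * qRh p w₀ rh + lam * qRh p w₁ rh := by
  unfold qRh
  rw [Finset.sum_congr rfl fun z _ =>
      (Finset.sum_congr rfl fun x _ => my_qJ_mix p w₀ w₁ lam rh z x).trans
        (by rw [Finset.sum_add_distrib, ← Finset.mul_sum, ← Finset.mul_sum]),
    Finset.sum_add_distrib, ← Finset.mul_sum, ← Finset.mul_sum]

lemma my_IRhX_convex {p : 𝒵 → 𝒳 → ℛ → ℝ} (hp : IsPMF p) {w₀ w₁ : ℛh → 𝒵 → 𝒳 → ℝ}
    (hw₀ : IsChannel w₀) (hw₁ : IsChannel w₁) {lam : ℝ} (h0 : 0 ≤ lam) (h1 : lam ≤ 1) :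
    IRhX p (fun rh z x => (1 - lam) * w₀ rh z x + lam * w₁ rh z x) ≤
      (1 - lam) * IRhX p w₀ + lam * IRhX p w₁ := by
  have hc0 : (0:ℝ) ≤ 1 - lam := by linarith
  unfold IRhX
  rw [Finset.mul_sum, Finset.mul_sum, ← Finset.sum_add_distrib]
  refine Finset.sum_le_sum fun rh _ => ?_
  rw [Finset.mul_sum, Finset.mul_sum, ← Finset.sum_add_distrib]
  refine Finset.sum_le_sum fun x _ => ?_
  rw [my_qRhX_mix, my_qRh_mix]
  have e1 : ((1 - lam) * qRh p w₀ rh + lam * qRh p w₁ rh) * pX p x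
      = (1 - lam) * (qRh p w₀ rh * pX p x) + lam * (qRh p w₁ rh * pX p x) := by ring
  rw [e1]
  have key := my_logsum2 ((1 - lam) * qRhX p w₀ rh x) (lam * qRhX p w₁ rh x)
    ((1 - lam) * (qRh p w₀ rh * pX p x)) (lam * (qRh p w₁ rh * pX p x))
    (mul_nonneg hc0 (my_qRhX_nonneg hp hw₀ rh x))
    (mul_nonneg h0 (my_qRhX_nonneg hp hw₁ rh x))
    (mul_nonneg hc0 (mul_nonneg (my_qRh_nonneg hp hw₀ rh) (my_pX_nonneg hp x)))
    (mul_nonneg h0 (mul_nonneg (my_qRh_nonneg hp hw₁ rh) (my_pX_nonneg hp x)))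
    (by
      intro hpos
      rcases mul_pos_iff.mp hpos with ⟨hl, hr⟩ | ⟨hl, hr⟩
      · exact mul_pos hl (mul_pos (hr.trans_le (my_qRhX_le_qRh hp hw₀ rh x))
          (hr.trans_le (my_qRhX_le_pX hp hw₀ rh x)))
      · linarith)
    (by
      intro hpos
      rcases mul_pos_iff.mp hpos with ⟨hl, hr⟩ | ⟨hl, hr⟩
      · exact mul_pos hl (mul_pos (hr.trans_le (my_qRhX_le_qRh hp hw₁ rh x))
          (hr.trans_le (my_qRhX_le_pX hp hw₁ rh x)))
      · linarith)
  calc ((1 - lam) * qRhX p w₀ rh x + lam * qRhX p w₁ rh x) *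
        logb 2 (((1 - lam) * qRhX p w₀ rh x + lam * qRhX p w₁ rh x) /
          ((1 - lam) * (qRh p w₀ rh * pX p x) + lam * (qRh p w₁ rh * pX p x)))
      ≤ ((1 - lam) * qRhX p w₀ rh x) *
          logb 2 (((1 - lam) * qRhX p w₀ rh x) / ((1 - lam) * (qRh p w₀ rh * pX p x)))
        + (lam * qRhX p w₁ rh x) *
          logb 2 ((lam * qRhX p w₁ rh x) / (lam * (qRh p w₁ rh * pX p x))) := key
    _ = (1 - lam) * (qRhX p w₀ rh x * logb 2 (qRhX p w₀ rh x / (qRh p w₀ rh * pX p x)))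
        + lam * (qRhX p w₁ rh x * logb 2 (qRhX p w₁ rh x / (qRh p w₁ rh * pX p x))) := by
        rw [my_scale_term _ _ _ hc0, my_scale_term _ _ _ h0]

lemma my_IRhZX_convex {p : 𝒵 → 𝒳 → ℛ → ℝ} (hp : IsPMF p) {w₀ w₁ : ℛh → 𝒵 → 𝒳 → ℝ}
    (hw₀ : IsChannel w₀) (hw₁ : IsChannel w₁) {lam : ℝ} (h0 : 0 ≤ lam) (h1 : lam ≤ 1) :
    IRhZX p (fun rh z x => (1 - lam) * w₀ rh z x + lam * w₁ rh z x) ≤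
      (1 - lam) * IRhZX p w₀ + lam * IRhZX p w₁ := by
  have hc0 : (0:ℝ) ≤ 1 - lam := by linarith
  unfold IRhZX
  rw [Finset.mul_sum, Finset.mul_sum, ← Finset.sum_add_distrib]
  refine Finset.sum_le_sum fun rh _ => ?_
  rw [Finset.mul_sum, Finset.mul_sum, ← Finset.sum_add_distrib]
  refine Finset.sum_le_sum fun z _ => ?_
  rw [Finset.mul_sum, Finset.mul_sum, ← Finset.sum_add_distrib]
  refine Finset.sum_le_sum fun x _ => ?_
  rw [my_qJ_mix, my_qRhZ_mix]
  have e1 : ((1 - lam) * qRhZ p w₀ rh z + lam * qRhZ p w₁ rh z) * pX p x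
      = (1 - lam) * (qRhZ p w₀ rh z * pX p x) + lam * (qRhZ p w₁ rh z * pX p x) := by ring
  rw [e1]
  have key := my_logsum2 ((1 - lam) * qJ p w₀ rh z x) (lam * qJ p w₁ rh z x)
    ((1 - lam) * (qRhZ p w₀ rh z * pX p x)) (lam * (qRhZ p w₁ rh z * pX p x))
    (mul_nonneg hc0 (my_qJ_nonneg hp hw₀ rh z x))
    (mul_nonneg h0 (my_qJ_nonneg hp hw₁ rh z x))
    (mul_nonneg hc0 (mul_nonneg (my_qRhZ_nonneg hp hw₀ rh z) (my_pX_nonneg hp x)))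
    (mul_nonneg h0 (mul_nonneg (my_qRhZ_nonneg hp hw₁ rh z) (my_pX_nonneg hp x)))
    (by
      intro hpos
      rcases mul_pos_iff.mp hpos with ⟨hl, hr⟩ | ⟨hl, hr⟩
      · exact mul_pos hl (mul_pos (hr.trans_le (my_qJ_le_qRhZ hp hw₀ rh z x))
          (hr.trans_le (my_qJ_le_pX hp hw₀ rh z x)))
      · linarith)
    (by
      intro hpos
      rcases mul_pos_iff.mp hpos with ⟨hl, hr⟩ | ⟨hl, hr⟩
      · exact mul_pos hl (mul_pos (hr.trans_le (my_qJ_le_qRhZ hp hw₁ rh z x))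
          (hr.trans_le (my_qJ_le_pX hp hw₁ rh z x)))
      · linarith)
  calc ((1 - lam) * qJ p w₀ rh z x + lam * qJ p w₁ rh z x) *
        logb 2 (((1 - lam) * qJ p w₀ rh z x + lam * qJ p w₁ rh z x) /
          ((1 - lam) * (qRhZ p w₀ rh z * pX p x) + lam * (qRhZ p w₁ rh z * pX p x)))
      ≤ ((1 - lam) * qJ p w₀ rh z x) *
          logb 2 (((1 - lam) * qJ p w₀ rh z x) / ((1 - lam) * (qRhZ p w₀ rh z * pX p x)))
        + (lam * qJ p w₁ rh z x) *
          logb 2 ((lam * qJ p w₁ rh z x) / (lam * (qRhZ p w₁ rh z * pX p x))) := key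
    _ = (1 - lam) * (qJ p w₀ rh z x * logb 2 (qJ p w₀ rh z x / (qRhZ p w₀ rh z * pX p x)))
        + lam * (qJ p w₁ rh z x * logb 2 (qJ p w₁ rh z x / (qRhZ p w₁ rh z * pX p x))) := by
        rw [my_scale_term _ _ _ hc0, my_scale_term _ _ _ h0]

lemma my_expDist_mix (p : 𝒵 → 𝒳 → ℛ → ℝ) (w₀ w₁ : ℛh → 𝒵 → 𝒳 → ℝ) (d : ℛh → ℛ → ℝ)
    (lam : ℝ) :
    expDist p (fun rh z x => (1 - lam) * w₀ rh z x + lam * w₁ rh z x) d =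
      (1 - lam) * expDist p w₀ d + lam * expDist p w₁ d := by
  unfold expDist
  rw [Finset.mul_sum, Finset.mul_sum, ← Finset.sum_add_distrib]
  refine Finset.sum_congr rfl fun rh _ => ?_
  rw [Finset.mul_sum, Finset.mul_sum, ← Finset.sum_add_distrib]
  refine Finset.sum_congr rfl fun z _ => ?_
  rw [Finset.mul_sum, Finset.mul_sum, ← Finset.sum_add_distrib]
  refine Finset.sum_congr rfl fun x _ => ?_
  rw [Finset.mul_sum, Finset.mul_sum, ← Finset.sum_add_distrib]
  refine Finset.sum_congr rfl fun r _ => ?_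
  ring

lemma my_expDist_nonneg {p : 𝒵 → 𝒳 → ℛ → ℝ} (hp : IsPMF p) {w : ℛh → 𝒵 → 𝒳 → ℝ}
    (hw : IsChannel w) {d : ℛh → ℛ → ℝ} (hd : ∀ rh r, 0 ≤ d rh r) :
    0 ≤ expDist p w d := by
  refine Finset.sum_nonneg fun rh _ => Finset.sum_nonneg fun z _ =>
    Finset.sum_nonneg fun x _ => Finset.sum_nonneg fun r _ => ?_
  exact mul_nonneg (mul_nonneg (hw.1 rh z x).1 (hp.1 z x r)) (hd rh r)

lemma my_Feas_mix {p : 𝒵 → 𝒳 → ℛ → ℝ} (hp : IsPMF p) {ε₀ δ₀ ε₁ δ₁ : ℝ}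
    {w₀ w₁ : ℛh → 𝒵 → 𝒳 → ℝ} (hf₀ : Feas p ε₀ δ₀ w₀) (hf₁ : Feas p ε₁ δ₁ w₁)
    {lam : ℝ} (h0 : 0 ≤ lam) (h1 : lam ≤ 1) :
    Feas p ((1 - lam) * ε₀ + lam * ε₁) ((1 - lam) * δ₀ + lam * δ₁)
      (fun rh z x => (1 - lam) * w₀ rh z x + lam * w₁ rh z x) := by
  have hc0 : (0:ℝ) ≤ 1 - lam := by linarith
  refine ⟨my_IsChannel_mix hf₀.1 hf₁.1 h0 h1, ?_, ?_⟩
  · calc IRhX p (fun rh z x => (1 - lam) * w₀ rh z x + lam * w₁ rh z x)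
        ≤ (1 - lam) * IRhX p w₀ + lam * IRhX p w₁ :=
          my_IRhX_convex hp hf₀.1 hf₁.1 h0 h1
      _ ≤ (1 - lam) * ε₀ + lam * ε₁ :=
          add_le_add (mul_le_mul_of_nonneg_left hf₀.2.1 hc0)
            (mul_le_mul_of_nonneg_left hf₁.2.1 h0)
  · calc IRhZX p (fun rh z x => (1 - lam) * w₀ rh z x + lam * w₁ rh z x)
        ≤ (1 - lam) * IRhZX p w₀ + lam * IRhZX p w₁ :=
          my_IRhZX_convex hp hf₀.1 hf₁.1 h0 h1
      _ ≤ (1 - lam) * δ₀ + lam * δ₁ :=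
          add_le_add (mul_le_mul_of_nonneg_left hf₀.2.2 hc0)
            (mul_le_mul_of_nonneg_left hf₁.2.2 h0)

end aux

lemma my_inf_mix (S₀ S₁ : Set ℝ) (hne₀ : S₀.Nonempty) (hne₁ : S₁.Nonempty)
    (C lam : ℝ) (h0 : 0 ≤ lam) (h1 : lam ≤ 1)
    (h : ∀ y₀ ∈ S₀, ∀ y₁ ∈ S₁, C ≤ (1 - lam) * y₀ + lam * y₁) :
    C ≤ (1 - lam) * sInf S₀ + lam * sInf S₁ := by
  rcases h0.eq_or_lt with hl0 | hl0
  · obtain ⟨y₁, hy₁⟩ := hne₁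
    rw [← hl0]
    simp only [sub_zero, one_mul, zero_mul, add_zero]
    refine le_csInf hne₀ fun y₀ hy₀ => ?_
    have := h y₀ hy₀ y₁ hy₁
    rw [← hl0] at this
    linarith
  · rcases h1.eq_or_lt with hl1 | hl1
    · obtain ⟨y₀, hy₀⟩ := hne₀
      rw [hl1]
      simp only [sub_self, zero_mul, one_mul, zero_add]
      refine le_csInf hne₁ fun y₁ hy₁ => ?_
      have := h y₀ hy₀ y₁ hy₁
      rw [hl1] at this
      linarith
    · have hc0 : (0:ℝ) < 1 - lam := by linarith
      have step1 : ∀ y₀ ∈ S₀, C ≤ (1 - lam) * y₀ + lam * sInf S₁ := by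
        intro y₀ hy₀
        have : (C - (1 - lam) * y₀) / lam ≤ sInf S₁ := by
          refine le_csInf hne₁ fun y₁ hy₁ => ?_
          rw [div_le_iff₀ hl0]
          have := h y₀ hy₀ y₁ hy₁
          linarith
        rw [div_le_iff₀ hl0] at this
        nlinarith
      have step2 : (C - lam * sInf S₁) / (1 - lam) ≤ sInf S₀ := by
        refine le_csInf hne₀ fun y₀ hy₀ => ?_
        rw [div_le_iff₀ hc0]
        have := step1 y₀ hy₀
        linarith
      rw [div_le_iff₀ hc0] at step2
      linarith

/-- The minimum expected distortion `D(ε,δ)` is jointly convex in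
`(ε,δ)`: for pairs `(ε₀,δ₀)` and `(ε₁,δ₁)` with nonempty feasible sets and `λ ∈ [0,1]`,
the feasible set at `((1−λ)ε₀+λε₁, (1−λ)δ₀+λδ₁)` is nonempty and
`D((1−λ)ε₀+λε₁, (1−λ)δ₀+λδ₁) ≤ (1−λ) D(ε₀,δ₀) + λ D(ε₁,δ₁)`. -/
theorem statement14
    (p : 𝒵 → 𝒳 → ℛ → ℝ) (hp : IsPMF p)
    (d : ℛh → ℛ → ℝ) (hd : ∀ rh r, 0 ≤ d rh r)
    (ε₀ δ₀ ε₁ δ₁ : ℝ) (hε₀ : 0 ≤ ε₀) (hδ₀ : 0 ≤ δ₀) (hε₁ : 0 ≤ ε₁) (hδ₁ : 0 ≤ δ₁)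
    (hne₀ : ∃ w : ℛh → 𝒵 → 𝒳 → ℝ, Feas p ε₀ δ₀ w)
    (hne₁ : ∃ w : ℛh → 𝒵 → 𝒳 → ℝ, Feas p ε₁ δ₁ w)
    (lam : ℝ) (hlam₀ : 0 ≤ lam) (hlam₁ : lam ≤ 1) :
    (∃ w : ℛh → 𝒵 → 𝒳 → ℝ, Feas p ((1 - lam) * ε₀ + lam * ε₁)
        ((1 - lam) * δ₀ + lam * δ₁) w) ∧
    Dfun p d ((1 - lam) * ε₀ + lam * ε₁) ((1 - lam) * δ₀ + lam * δ₁) ≤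
      (1 - lam) * Dfun p d ε₀ δ₀ + lam * Dfun p d ε₁ δ₁ := by
  obtain ⟨w₀, hf₀⟩ := hne₀
  obtain ⟨w₁, hf₁⟩ := hne₁
  have hfeas := my_Feas_mix hp hf₀ hf₁ hlam₀ hlam₁
  refine ⟨⟨_, hfeas⟩, ?_⟩
  set S₀ : Set ℝ := {y : ℝ | ∃ w : ℛh → 𝒵 → 𝒳 → ℝ, Feas p ε₀ δ₀ w ∧ y = expDist p w d}
    with hS₀
  set S₁ : Set ℝ := {y : ℝ | ∃ w : ℛh → 𝒵 → 𝒳 → ℝ, Feas p ε₁ δ₁ w ∧ y = expDist p w d}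
    with hS₁
  have hne₀' : S₀.Nonempty := ⟨expDist p w₀ d, w₀, hf₀, rfl⟩
  have hne₁' : S₁.Nonempty := ⟨expDist p w₁ d, w₁, hf₁, rfl⟩
  have hbdd : BddBelow {y : ℝ | ∃ w : ℛh → 𝒵 → 𝒳 → ℝ,
      Feas p ((1 - lam) * ε₀ + lam * ε₁) ((1 - lam) * δ₀ + lam * δ₁) w ∧
      y = expDist p w d} := by
    refine ⟨0, fun y hy => ?_⟩
    obtain ⟨w, hw, rfl⟩ := hy
    exact my_expDist_nonneg hp hw.1 hd
  refine my_inf_mix S₀ S₁ hne₀' hne₁' _ lam hlam₀ hlam₁ ?_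
  rintro y₀ ⟨v₀, hv₀, rfl⟩ y₁ ⟨v₁, hv₁, rfl⟩
  refine csInf_le hbdd ?_
  exact ⟨fun rh z x => (1 - lam) * v₀ rh z x + lam * v₁ rh z x,
    my_Feas_mix hp hv₀ hv₁ hlam₀ hlam₁, (my_expDist_mix p v₀ v₁ d lam).symm⟩

end
end

section
/- For every channel w, ∑_{(r̂,z,x): q(r̂,z,x)>0} q(r̂,z,x) · D( p(·|z,x) ‖ q(·|r̂) ) = I(R; Z,X) − I(R; R̂), where p(·|z,x) is the conditional pmf of R given (Z,X) = (z,x) under p, q(·|r̂) is the conditional pmf of R given R̂ = r̂ under the induced joint pmf q, and every Kullback–Leibler term in the sum is finite (whenever q(r̂,z,x) > 0 and p(r|z,x) > 0 one has q(r|r̂) > 0). -/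
open Real Finset

noncomputable section

variable {𝒵 𝒳 ℛ ℛh : Type} [Fintype 𝒵] [Fintype 𝒳] [Fintype ℛ] [Fintype ℛh]

/-- Marginal `p(r)`. -/
def pR (p : 𝒵 → 𝒳 → ℛ → ℝ) (r : ℛ) : ℝ := ∑ z, ∑ x, p z x r

/-- Induced joint `q(r,r̂) = ∑_{z,x} w(r̂|z,x) p(z,x,r)`. -/
def qRRh (p : 𝒵 → 𝒳 → ℛ → ℝ) (w : ℛh → 𝒵 → 𝒳 → ℝ) (r : ℛ) (rh : ℛh) : ℝ :=
  ∑ z, ∑ x, w rh z x * p z x r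

/-- Kullback–Leibler divergence `D(u‖v) = ∑_{r : u(r) > 0} u(r) log₂(u(r)/v(r))`. -/
def DKL [DecidableEq ℛ] (u v : ℛ → ℝ) : ℝ :=
  ∑ r ∈ Finset.univ.filter (fun r => 0 < u r), u r * logb 2 (u r / v r)

/-- Mutual information `I(R;Z,X)` of the fixed pmf `p`. -/
def IRZX (p : 𝒵 → 𝒳 → ℛ → ℝ) : ℝ :=
  ∑ z, ∑ x, ∑ r, p z x r * logb 2 (p z x r / (pZX p z x * pR p r))

/-- Mutual information `I(R;R̂)` of the induced joint pmf `q`. -/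
def IRRh (p : 𝒵 → 𝒳 → ℛ → ℝ) (w : ℛh → 𝒵 → 𝒳 → ℝ) : ℝ :=
  ∑ r, ∑ rh, qRRh p w r rh * logb 2 (qRRh p w r rh / (pR p r * qRh p w rh))

/-- For every channel `w`,
`∑_{(r̂,z,x): q(r̂,z,x)>0} q(r̂,z,x) D( p(·|z,x) ‖ q(·|r̂) ) = I(R;Z,X) − I(R;R̂)`,
where `p(·|z,x)` is the conditional of `R` given `(Z,X)` under `p` and `q(·|r̂)` the
conditional of `R` given `R̂` under `q`; each KL term is finite, i.e. whenever
`q(r̂,z,x) > 0` and `p(r|z,x) > 0` one has `q(r|r̂) > 0`. -/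
theorem statement16 [DecidableEq ℛ]
    (p : 𝒵 → 𝒳 → ℛ → ℝ) (hp : IsPMF p)
    (w : ℛh → 𝒵 → 𝒳 → ℝ) (hw : IsChannel w) :
    (∀ rh z x r, 0 < qJ p w rh z x → 0 < p z x r / pZX p z x →
        0 < qRRh p w r rh / qRh p w rh) ∧
    (∑ rh, ∑ z, ∑ x,
        if 0 < qJ p w rh z x then
          qJ p w rh z x *
            DKL (fun r => p z x r / pZX p z x) (fun r => qRRh p w r rh / qRh p w rh)
        else 0)
      = IRZX p - IRRh p w := by
  obtain ⟨hp0, hp1⟩ := hp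
  obtain ⟨hw01, hw1⟩ := hw
  have hw0 : ∀ rh z x, 0 ≤ w rh z x := fun rh z x => (hw01 rh z x).1
  have hpZX0 : ∀ z x, 0 ≤ pZX p z x := fun z x =>
    Finset.sum_nonneg fun r _ => hp0 z x r
  have hpZX_ge : ∀ z x r, p z x r ≤ pZX p z x := fun z x r =>
    Finset.single_le_sum (fun r _ => hp0 z x r) (Finset.mem_univ r)
  have hqJ0 : ∀ rh z x, 0 ≤ qJ p w rh z x := fun rh z x =>
    mul_nonneg (hw0 rh z x) (hpZX0 z x)
  have hqRRh0 : ∀ r rh, 0 ≤ qRRh p w r rh := fun r rh =>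
    Finset.sum_nonneg fun z _ => Finset.sum_nonneg fun x _ =>
      mul_nonneg (hw0 rh z x) (hp0 z x r)
  have hqRh_ge : ∀ rh z x, qJ p w rh z x ≤ qRh p w rh := by
    intro rh z x
    calc qJ p w rh z x ≤ ∑ x', qJ p w rh z x' :=
          Finset.single_le_sum (fun x' _ => hqJ0 rh z x') (Finset.mem_univ x)
      _ ≤ ∑ z', ∑ x', qJ p w rh z' x' :=
          Finset.single_le_sum
            (fun z' _ => Finset.sum_nonneg fun x' _ => hqJ0 rh z' x')
            (Finset.mem_univ z)
  have hqRRh_ge : ∀ rh z x r, w rh z x * p z x r ≤ qRRh p w r rh := by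
    intro rh z x r
    calc w rh z x * p z x r ≤ ∑ x', w rh z x' * p z x' r :=
          Finset.single_le_sum
            (fun x' _ => mul_nonneg (hw0 rh z x') (hp0 z x' r)) (Finset.mem_univ x)
      _ ≤ ∑ z', ∑ x', w rh z' x' * p z' x' r :=
          Finset.single_le_sum
            (fun z' _ => Finset.sum_nonneg fun x' _ =>
              mul_nonneg (hw0 rh z' x') (hp0 z' x' r))
            (Finset.mem_univ z)
  have hqJ_pos : ∀ {rh z x}, 0 < qJ p w rh z x → 0 < w rh z x ∧ 0 < pZX p z x := by
    intro rh z x h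
    rcases mul_pos_iff.mp h with ⟨h1, h2⟩ | ⟨h1, _⟩
    · exact ⟨h1, h2⟩
    · exact absurd h1 (not_lt.mpr (hw0 rh z x))
  have hpos : ∀ rh z x r, 0 < qJ p w rh z x → 0 < p z x r →
      0 < qRRh p w r rh / qRh p w rh := by
    intro rh z x r hq hpr
    obtain ⟨hwpos, _⟩ := hqJ_pos hq
    exact div_pos (lt_of_lt_of_le (mul_pos hwpos hpr) (hqRRh_ge rh z x r))
      (lt_of_lt_of_le hq (hqRh_ge rh z x))
  have hpZX_zero : ∀ z x r, pZX p z x = 0 → p z x r = 0 := by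
    intro z x r h
    exact le_antisymm (h ▸ hpZX_ge z x r) (hp0 z x r)
  have hpR_ge' : ∀ z x r, p z x r ≤ pR p r := by
    intro z x r
    calc p z x r ≤ ∑ x', p z x' r :=
          Finset.single_le_sum (fun x' _ => hp0 z x' r) (Finset.mem_univ x)
      _ ≤ ∑ z', ∑ x', p z' x' r :=
          Finset.single_le_sum
            (fun z' _ => Finset.sum_nonneg fun x' _ => hp0 z' x' r) (Finset.mem_univ z)
  have hpR_eq : ∀ r, (∑ rh', qRRh p w r rh') = pR p r := by
    intro r
    unfold pR qRRh
    calc (∑ rh', ∑ z, ∑ x, w rh' z x * p z x r)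
        = ∑ z, ∑ rh', ∑ x, w rh' z x * p z x r := Finset.sum_comm
      _ = ∑ z, ∑ x, ∑ rh', w rh' z x * p z x r :=
          Finset.sum_congr rfl fun z _ => Finset.sum_comm
      _ = ∑ z, ∑ x, p z x r := by
          refine Finset.sum_congr rfl fun z _ => Finset.sum_congr rfl fun x _ => ?_
          rw [← Finset.sum_mul, hw1, one_mul]
  have hpR_ge : ∀ r rh, qRRh p w r rh ≤ pR p r := by
    intro r rh
    rw [← hpR_eq r]
    exact Finset.single_le_sum (fun rh' _ => hqRRh0 r rh') (Finset.mem_univ rh)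
  have hqRRh_le_qRh : ∀ r rh, qRRh p w r rh ≤ qRh p w rh := by
    intro r rh
    unfold qRRh qRh qJ
    exact Finset.sum_le_sum fun z _ => Finset.sum_le_sum fun x _ =>
      mul_le_mul_of_nonneg_left (hpZX_ge z x r) (hw0 rh z x)
  refine ⟨?_, ?_⟩
  · intro rh z x r hq hpr
    obtain ⟨_, hZXpos⟩ := hqJ_pos hq
    have hppos : 0 < p z x r := by
      have := mul_pos hpr hZXpos
      rwa [div_mul_cancel₀ _ hZXpos.ne'] at this
    exact hpos rh z x r hq hppos
  -- main equality
  have key : (∑ rh, ∑ z, ∑ x,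
        if 0 < qJ p w rh z x then
          qJ p w rh z x *
            DKL (fun r => p z x r / pZX p z x) (fun r => qRRh p w r rh / qRh p w rh)
        else 0)
      = ∑ rh, ∑ z, ∑ x, ∑ r, w rh z x * p z x r *
          (logb 2 (p z x r / pZX p z x) - logb 2 (qRRh p w r rh / qRh p w rh)) := by
    refine Finset.sum_congr rfl fun rh _ => Finset.sum_congr rfl fun z _ =>
      Finset.sum_congr rfl fun x _ => ?_
    by_cases hq : 0 < qJ p w rh z x
    · rw [if_pos hq]
      obtain ⟨hwpos, hZXpos⟩ := hqJ_pos hq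
      unfold DKL
      rw [Finset.sum_filter, Finset.mul_sum]
      refine Finset.sum_congr rfl fun r _ => ?_
      simp only [mul_ite, mul_zero]
      by_cases hpr : 0 < p z x r
      · have hcond : 0 < p z x r / pZX p z x := div_pos hpr hZXpos
        rw [if_pos hcond]
        have hqrr : 0 < qRRh p w r rh / qRh p w rh := hpos rh z x r hq hpr
        rw [Real.logb_div hcond.ne' hqrr.ne']
        have hqp : qJ p w rh z x * (p z x r / pZX p z x) = w rh z x * p z x r := by
          unfold qJ
          field_simp
        rw [← mul_assoc, hqp]
      · have hp0' : p z x r = 0 := le_antisymm (not_lt.mp hpr) (hp0 z x r)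
        rw [if_neg (by rw [hp0']; simp : ¬0 < p z x r / pZX p z x), hp0']
        ring
    · rw [if_neg hq]
      have hq0 : qJ p w rh z x = 0 := le_antisymm (not_lt.mp hq) (hqJ0 rh z x)
      symm
      refine Finset.sum_eq_zero fun r _ => ?_
      rcases mul_eq_zero.mp hq0 with h | h
      · rw [h]; ring
      · rw [hpZX_zero z x r h]; ring
  have splitAB : (∑ rh, ∑ z, ∑ x, ∑ r, w rh z x * p z x r *
          (logb 2 (p z x r / pZX p z x) - logb 2 (qRRh p w r rh / qRh p w rh)))
      = (∑ rh, ∑ z, ∑ x, ∑ r, w rh z x * p z x r * logb 2 (p z x r / pZX p z x))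
        - (∑ rh, ∑ z, ∑ x, ∑ r,
            w rh z x * p z x r * logb 2 (qRRh p w r rh / qRh p w rh)) := by
    simp only [mul_sub, Finset.sum_sub_distrib]
  have hA : (∑ rh, ∑ z, ∑ x, ∑ r, w rh z x * p z x r * logb 2 (p z x r / pZX p z x))
      = ∑ z, ∑ x, ∑ r, p z x r * logb 2 (p z x r / pZX p z x) := by
    calc (∑ rh, ∑ z, ∑ x, ∑ r, w rh z x * p z x r * logb 2 (p z x r / pZX p z x))
        = ∑ z, ∑ rh, ∑ x, ∑ r, w rh z x * p z x r * logb 2 (p z x r / pZX p z x) :=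
          Finset.sum_comm
      _ = ∑ z, ∑ x, ∑ rh, ∑ r, w rh z x * p z x r * logb 2 (p z x r / pZX p z x) :=
          Finset.sum_congr rfl fun z _ => Finset.sum_comm
      _ = ∑ z, ∑ x, ∑ r, ∑ rh, w rh z x * p z x r * logb 2 (p z x r / pZX p z x) :=
          Finset.sum_congr rfl fun z _ => Finset.sum_congr rfl fun x _ => Finset.sum_comm
      _ = ∑ z, ∑ x, ∑ r, p z x r * logb 2 (p z x r / pZX p z x) := by
          refine Finset.sum_congr rfl fun z _ => Finset.sum_congr rfl fun x _ =>
            Finset.sum_congr rfl fun r _ => ?_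
          simp_rw [mul_assoc]
          rw [← Finset.sum_mul, hw1, one_mul]
  have hB : (∑ rh, ∑ z, ∑ x, ∑ r,
        w rh z x * p z x r * logb 2 (qRRh p w r rh / qRh p w rh))
      = ∑ rh, ∑ r, qRRh p w r rh * logb 2 (qRRh p w r rh / qRh p w rh) := by
    refine Finset.sum_congr rfl fun rh _ => ?_
    calc (∑ z, ∑ x, ∑ r, w rh z x * p z x r * logb 2 (qRRh p w r rh / qRh p w rh))
        = ∑ z, ∑ r, ∑ x, w rh z x * p z x r * logb 2 (qRRh p w r rh / qRh p w rh) :=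
          Finset.sum_congr rfl fun z _ => Finset.sum_comm
      _ = ∑ r, ∑ z, ∑ x, w rh z x * p z x r * logb 2 (qRRh p w r rh / qRh p w rh) :=
          Finset.sum_comm
      _ = ∑ r, qRRh p w r rh * logb 2 (qRRh p w r rh / qRh p w rh) := by
          refine Finset.sum_congr rfl fun r _ => ?_
          unfold qRRh
          rw [Finset.sum_mul]
          refine Finset.sum_congr rfl fun z _ => ?_
          rw [Finset.sum_mul]
  have hIRZX : IRZX p
      = (∑ z, ∑ x, ∑ r, p z x r * logb 2 (p z x r / pZX p z x))
        - (∑ z, ∑ x, ∑ r, p z x r * logb 2 (pR p r)) := by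
    have hterm : ∀ z x r, p z x r * logb 2 (p z x r / (pZX p z x * pR p r))
        = p z x r * logb 2 (p z x r / pZX p z x) - p z x r * logb 2 (pR p r) := by
      intro z x r
      by_cases hpr : 0 < p z x r
      · have h1 : 0 < pZX p z x := lt_of_lt_of_le hpr (hpZX_ge z x r)
        have h2 : 0 < pR p r := lt_of_lt_of_le hpr (hpR_ge' z x r)
        rw [div_mul_eq_div_div, Real.logb_div (div_pos hpr h1).ne' h2.ne', mul_sub]
      · have h0 : p z x r = 0 := le_antisymm (not_lt.mp hpr) (hp0 z x r)
        rw [h0]; ring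
    have : IRZX p = ∑ z, ∑ x, ∑ r,
        (p z x r * logb 2 (p z x r / pZX p z x) - p z x r * logb 2 (pR p r)) :=
      Finset.sum_congr rfl fun z _ => Finset.sum_congr rfl fun x _ =>
        Finset.sum_congr rfl fun r _ => hterm z x r
    rw [this]
    simp only [Finset.sum_sub_distrib]
  have hIRRh : IRRh p w
      = (∑ r, ∑ rh, qRRh p w r rh * logb 2 (qRRh p w r rh / qRh p w rh))
        - (∑ r, ∑ rh, qRRh p w r rh * logb 2 (pR p r)) := by
    have hterm : ∀ r rh, qRRh p w r rh * logb 2 (qRRh p w r rh / (pR p r * qRh p w rh))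
        = qRRh p w r rh * logb 2 (qRRh p w r rh / qRh p w rh)
          - qRRh p w r rh * logb 2 (pR p r) := by
      intro r rh
      by_cases hq : 0 < qRRh p w r rh
      · have h1 : 0 < pR p r := lt_of_lt_of_le hq (hpR_ge r rh)
        have h2 : 0 < qRh p w rh := lt_of_lt_of_le hq (hqRRh_le_qRh r rh)
        rw [mul_comm (pR p r), div_mul_eq_div_div,
          Real.logb_div (div_pos hq h2).ne' h1.ne', mul_sub]
      · have h0 : qRRh p w r rh = 0 := le_antisymm (not_lt.mp hq) (hqRRh0 r rh)
        rw [h0]; ring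
    have : IRRh p w = ∑ r, ∑ rh,
        (qRRh p w r rh * logb 2 (qRRh p w r rh / qRh p w rh)
          - qRRh p w r rh * logb 2 (pR p r)) :=
      Finset.sum_congr rfl fun r _ => Finset.sum_congr rfl fun rh _ => hterm r rh
    rw [this]
    simp only [Finset.sum_sub_distrib]
  have hC : (∑ z, ∑ x, ∑ r, p z x r * logb 2 (pR p r))
      = ∑ r, pR p r * logb 2 (pR p r) := by
    calc (∑ z, ∑ x, ∑ r, p z x r * logb 2 (pR p r))
        = ∑ z, ∑ r, ∑ x, p z x r * logb 2 (pR p r) :=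
          Finset.sum_congr rfl fun z _ => Finset.sum_comm
      _ = ∑ r, ∑ z, ∑ x, p z x r * logb 2 (pR p r) := Finset.sum_comm
      _ = ∑ r, pR p r * logb 2 (pR p r) := by
          refine Finset.sum_congr rfl fun r _ => ?_
          unfold pR
          rw [Finset.sum_mul]
          refine Finset.sum_congr rfl fun z _ => ?_
          rw [Finset.sum_mul]
  have hC' : (∑ r, ∑ rh, qRRh p w r rh * logb 2 (pR p r))
      = ∑ r, pR p r * logb 2 (pR p r) := by
    refine Finset.sum_congr rfl fun r _ => ?_
    rw [← Finset.sum_mul, hpR_eq r]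
  have hswap : (∑ rh, ∑ r, qRRh p w r rh * logb 2 (qRRh p w r rh / qRh p w rh))
      = ∑ r, ∑ rh, qRRh p w r rh * logb 2 (qRRh p w r rh / qRh p w rh) :=
    Finset.sum_comm
  rw [key, splitAB, hA, hB, hswap, hIRZX, hIRRh, hC, hC']
  ring

end
end
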